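/- arXiv:2403.09300 — 3 statements merged into one kernel-verified Lean document; each statement's English description precedes it below -/
import Mathlib

section
/- Let G be a MAG over a finite vertex set W. A vertex X is removable in G if and only if for every collider path u = (X, V1, ..., Vm, Y) in G and every vertex Z ∈ W ∖ {X, Y, V1, ..., Vm} such that {X, V1, ..., Vm} ⊆ Pa(Z;G), the vertices Y and Z are neighbors in G. -/
/-!
Common framework: mixed graphs, paths, colliders, m-separation, MAGs,
removability, Markov boundaries, latent projection, orders.
-/

/-- A mixed graph over a vertex set `verts`, with directed edges `dir` and
bidirected edges `bi`. -/
structure MixedGraph (V : Type*) where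
  verts : Set V
  dir : V → V → Prop
  bi : V → V → Prop
  bi_symm : ∀ {a b : V}, bi a b → bi b a
  dir_mem : ∀ {a b : V}, dir a b → a ∈ verts ∧ b ∈ verts
  bi_mem : ∀ {a b : V}, bi a b → a ∈ verts ∧ b ∈ verts

namespace MixedGraph

variable {V : Type*}

/-- Two vertices are neighbors (adjacent) if joined by a directed or bidirected edge. -/
def adj (G : MixedGraph V) (a b : V) : Prop := G.dir a b ∨ G.dir b a ∨ G.bi a b

/-- `a` is an ancestor of `b` (every vertex is an ancestor of itself). -/
def anc (G : MixedGraph V) (a b : V) : Prop := Relation.ReflTransGen G.dir a b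

/-- The set of neighbors of `a`. -/
def neighbors (G : MixedGraph V) (a : V) : Set V := {b | b ≠ a ∧ G.adj a b}

/-- The set of parents of `a`. -/
def parents (G : MixedGraph V) (a : V) : Set V := {b | G.dir b a}

/-- The set of children of `a`. -/
def children (G : MixedGraph V) (a : V) : Set V := {b | G.dir a b}

/-- Co-parents of `a` (in a DAG): non-neighbors sharing a common child with `a`. -/
def coparents (G : MixedGraph V) (a : V) : Set V :=
  {b | b ≠ a ∧ ¬ G.adj a b ∧ ∃ c, G.dir a c ∧ G.dir b c}

/-- The district of `a`: vertices joined to `a` by a path of bidirected edges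
(including `a` itself). -/
def district (G : MixedGraph V) (a : V) : Set V := {b | Relation.ReflTransGen G.bi b a}

/-- `PaP(a) = Pa(a) ∪ Dis(a) ∪ Pa(Dis(a))`. -/
def paP (G : MixedGraph V) (a : V) : Set V :=
  G.parents a ∪ G.district a ∪ ⋃ b ∈ G.district a, G.parents b

/-- The induced subgraph of `G` over `W`. -/
def induce (G : MixedGraph V) (W : Set V) : MixedGraph V where
  verts := G.verts ∩ W
  dir a b := G.dir a b ∧ a ∈ W ∧ b ∈ W
  bi a b := G.bi a b ∧ a ∈ W ∧ b ∈ W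
  bi_symm h := ⟨G.bi_symm h.1, h.2.2, h.2.1⟩
  dir_mem h := ⟨⟨(G.dir_mem h.1).1, h.2.1⟩, (G.dir_mem h.1).2, h.2.2⟩
  bi_mem h := ⟨⟨(G.bi_mem h.1).1, h.2.1⟩, (G.bi_mem h.1).2, h.2.2⟩

end MixedGraph

/-- Possible orientations of an edge along a path: `fwd` is `a → b`,
`bwd` is `a ← b`, `bidir` is `a ↔ b`. -/
inductive EdgeDir
  | fwd | bwd | bidir

/-- Validity of an orientation mark between consecutive path vertices. -/
def edirValid {V : Type*} (G : MixedGraph V) (a b : V) : EdgeDir → Prop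
  | .fwd => G.dir a b
  | .bwd => G.dir b a
  | .bidir => G.bi a b

/-- The edge has an arrowhead at its second (right) endpoint. -/
def headAt2 (e : EdgeDir) : Prop := e = .fwd ∨ e = .bidir

/-- The edge has an arrowhead at its first (left) endpoint. -/
def headAt1 (e : EdgeDir) : Prop := e = .bwd ∨ e = .bidir

/-- A path in a mixed graph `G` from `x` to `y`: a sequence of distinct vertices
`vert 0, …, vert len` together with an oriented edge of `G` between consecutive
vertices. -/
structure MPath {V : Type*} (G : MixedGraph V) (x y : V) where
  len : ℕ
  len_pos : 0 < len
  vert : ℕ → V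
  edir : ℕ → EdgeDir
  first : vert 0 = x
  last : vert len = y
  mem : ∀ i, i ≤ len → vert i ∈ G.verts
  inj : ∀ i j, i ≤ len → j ≤ len → vert i = vert j → i = j
  valid : ∀ i, i < len → edirValid G (vert i) (vert (i + 1)) (edir i)

namespace MPath

variable {V : Type*} {G : MixedGraph V} {x y : V}

/-- The vertex at interior position `i` (where `0 < i < len`) is a collider on the path:
both incident path edges have an arrowhead at it. -/
def collider (p : MPath G x y) (i : ℕ) : Prop :=
  headAt2 (p.edir (i - 1)) ∧ headAt1 (p.edir i)

/-- The path is blocked by `Z`: some interior vertex is a collider that is not an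
ancestor of any vertex of `Z ∪ {x, y}`, or a non-collider belonging to `Z`. -/
def blocked (p : MPath G x y) (Z : Set V) : Prop :=
  ∃ i, 0 < i ∧ i < p.len ∧
    ((p.collider i ∧ ∀ w ∈ Z ∪ ({x, y} : Set V), ¬ G.anc (p.vert i) w) ∨
     (¬ p.collider i ∧ p.vert i ∈ Z))

/-- A collider path: every interior vertex is a collider on the path. -/
def isColliderPath (p : MPath G x y) : Prop :=
  ∀ i, 0 < i → i < p.len → p.collider i

/-- An inducing path relative to `W2`: every interior non-collider belongs to `W2`,
and every interior collider is an ancestor of `x` or of `y`. -/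
def isInducing (p : MPath G x y) (W2 : Set V) : Prop :=
  ∀ i, 0 < i → i < p.len →
    (p.collider i → G.anc (p.vert i) x ∨ G.anc (p.vert i) y) ∧
    (¬ p.collider i → p.vert i ∈ W2)

end MPath

/-- `Z` m-separates `x` and `y` in `G`: every path between `x` and `y` is blocked by `Z`. -/
def mSep {V : Type*} (G : MixedGraph V) (x y : V) (Z : Set V) : Prop :=
  ∀ p : MPath G x y, p.blocked Z

namespace MixedGraph

variable {V : Type*}

/-- The Markov boundary of `a` in `G`: vertices `b ≠ a` with a collider path to `a`. -/
def mb (G : MixedGraph V) (a : V) : Set V :=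
  {b | b ≠ a ∧ ∃ p : MPath G b a, p.isColliderPath}

/-- `G` is a maximal ancestral graph (MAG): no directed cycles, no almost directed
cycles, and every pair of distinct non-neighbor vertices is m-separated by some set. -/
structure IsMAG (G : MixedGraph V) : Prop where
  no_dir_cycle : ∀ a b, G.dir a b → ¬ G.anc b a
  no_almost_dir_cycle : ∀ a b, G.bi a b → ¬ G.anc b a
  maximal : ∀ a ∈ G.verts, ∀ b ∈ G.verts, a ≠ b → ¬ G.adj a b →
    ∃ Z ⊆ G.verts \ {a, b}, mSep G a b Z

/-- `G` is a DAG: a MAG with no bidirected edges. -/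
def IsDAG (G : MixedGraph V) : Prop := G.IsMAG ∧ ∀ a b, ¬ G.bi a b

/-- `x` is removable in `G`: `G` and the induced subgraph `G[verts ∖ {x}]` impose the
same m-separation relations among the vertices of `verts ∖ {x}`. -/
def Removable (G : MixedGraph V) (x : V) : Prop :=
  ∀ y z, y ∈ G.verts → z ∈ G.verts → y ≠ x → z ≠ x → y ≠ z →
    ∀ Z ⊆ G.verts \ {x, y, z},
      (mSep G y z Z ↔ mSep (G.induce (G.verts \ {x})) y z Z)

/-- There is an inducing path between `a` and `b` in `G` relative to `W2`. -/
def InducingAdj (G : MixedGraph V) (W2 : Set V) (a b : V) : Prop :=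
  (∃ p : MPath G a b, p.isInducing W2) ∨ (∃ p : MPath G b a, p.isInducing W2)

/-- The latent projection of `G` onto `W1`: distinct `a, b ∈ W1` are joined iff there is
an inducing path between them in `G` relative to `G.verts ∖ W1`; the edge is `a → b` if
`a` is an ancestor of `b` in `G` but not conversely, and `a ↔ b` if neither is an
ancestor of the other. -/
def project (G : MixedGraph V) (W1 : Set V) : MixedGraph V where
  verts := W1
  dir a b := a ∈ W1 ∧ b ∈ W1 ∧ a ≠ b ∧ InducingAdj G (G.verts \ W1) a b ∧
    G.anc a b ∧ ¬ G.anc b a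
  bi a b := a ∈ W1 ∧ b ∈ W1 ∧ a ≠ b ∧ InducingAdj G (G.verts \ W1) a b ∧
    ¬ G.anc a b ∧ ¬ G.anc b a
  bi_symm h :=
    ⟨h.2.1, h.1, h.2.2.1.symm, Or.symm h.2.2.2.1, h.2.2.2.2.2, h.2.2.2.2.1⟩
  dir_mem h := ⟨h.1, h.2.1⟩
  bi_mem h := ⟨h.1, h.2.1⟩

/-- Two mixed graphs over the same vertex set impose exactly the same m-separation
relations. -/
def MarkovEquiv (G1 G2 : MixedGraph V) : Prop :=
  ∀ a ∈ G1.verts, ∀ b ∈ G1.verts, a ≠ b → ∀ Z ⊆ G1.verts \ {a, b},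
    (mSep G1 a b Z ↔ mSep G2 a b Z)

/-- A list of vertices is an order over (the vertex set of) `G` if it lists each vertex
exactly once. -/
def IsOrder (G : MixedGraph V) (l : List V) : Prop :=
  l.Nodup ∧ ∀ v, v ∈ l ↔ v ∈ G.verts

/-- An r-order of `G`: an order `(X₁, …, Xₙ)` such that each `Xᵢ` is removable in the
induced subgraph `G[{Xᵢ, …, Xₙ}]`. -/
def IsROrder (G : MixedGraph V) (l : List V) : Prop :=
  IsOrder G l ∧ ∀ (i : ℕ) (h : i < l.length),
    Removable (G.induce {v | v ∈ l.drop i}) (l.get ⟨i, h⟩)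

/-- A c-order of a DAG `G`: an order `(X₁, …, Xₙ)` such that each `Xᵢ` has no children
in the induced subgraph `G[{Xᵢ, …, Xₙ}]`. -/
def IsCOrder (G : MixedGraph V) (l : List V) : Prop :=
  IsOrder G l ∧ ∀ (i : ℕ) (h : i < l.length),
    ∀ v, ¬ (G.induce {v' | v' ∈ l.drop i}).dir (l.get ⟨i, h⟩) v

/-- The maximum in-degree of `G`. -/
noncomputable def deltaIn (G : MixedGraph V) : ℕ :=
  sSup {n | ∃ a ∈ G.verts, n = (G.parents a).ncard}

/-- `Δin⁺(G)`: the maximum of `|PaP(a)|` over the vertices of `G`. -/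
noncomputable def deltaInPlus (G : MixedGraph V) : ℕ :=
  sSup {n | ∃ a ∈ G.verts, n = (G.paP a).ncard}

/-- `G` is diamond-free: it contains no induced subgraph on four vertices `a, b, c, d`
whose skeleton has exactly the edges a–b, a–c, a–d, b–d, c–d (with b, c non-adjacent). -/
def DiamondFree (G : MixedGraph V) : Prop :=
  ¬ ∃ a b c d : V, a ∈ G.verts ∧ b ∈ G.verts ∧ c ∈ G.verts ∧ d ∈ G.verts ∧
    a ≠ b ∧ a ≠ c ∧ a ≠ d ∧ b ≠ c ∧ b ≠ d ∧ c ≠ d ∧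
    G.adj a b ∧ G.adj a c ∧ G.adj a d ∧ G.adj b d ∧ G.adj c d ∧ ¬ G.adj b c

end MixedGraph

/-- The cost of an order `(X₁, …, Xₙ)`: `Σₜ |Ne(Xₜ; G_{Vₜ})|` where `Vₜ = {Xₜ, …, Xₙ}`
and `G_{Vₜ}` is the latent projection of `G` onto `Vₜ` (the term for `t = n` is zero). -/
noncomputable def orderCost {V : Type*} (G : MixedGraph V) : List V → ℕ
  | [] => 0
  | x :: rest => ((G.project {v | v ∈ x :: rest}).neighbors x).ncard + orderCost G rest


namespace RemAux
open MixedGraph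

variable {V : Type*} {G : MixedGraph V}

def flip : EdgeDir → EdgeDir
  | .fwd => .bwd
  | .bwd => .fwd
  | .bidir => .bidir

@[simp] lemma headAt2_flip (e : EdgeDir) : headAt2 (flip e) ↔ headAt1 e := by
  cases e <;> simp [flip, headAt1, headAt2]

@[simp] lemma headAt1_flip (e : EdgeDir) : headAt1 (flip e) ↔ headAt2 e := by
  cases e <;> simp [flip, headAt1, headAt2]

lemma edirValid_flip {a b : V} {e : EdgeDir} (h : edirValid G a b e) :
    edirValid G b a (flip e) := by
  cases e with
  | fwd => exact h
  | bwd => exact h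
  | bidir => exact G.bi_symm h

lemma edirValid_mem {a b : V} {e : EdgeDir} (h : edirValid G a b e) :
    a ∈ G.verts ∧ b ∈ G.verts := by
  cases e with
  | fwd => exact G.dir_mem h
  | bwd => exact ⟨(G.dir_mem h).2, (G.dir_mem h).1⟩
  | bidir => exact G.bi_mem h

def mkEdgePath (e : EdgeDir) {a b : V} (hv : edirValid G a b e) (hne : a ≠ b) :
    MPath G a b where
  len := 1
  len_pos := one_pos
  vert i := if i = 0 then a else b
  edir _ := e
  first := rfl
  last := rfl
  mem i _ := by
    by_cases h : i = 0
    · simpa [h] using (edirValid_mem hv).1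
    · simpa [h] using (edirValid_mem hv).2
  inj i j hi hj hij := by
    interval_cases i <;> interval_cases j <;> simp_all
  valid i hi := by
    have : i = 0 := by omega
    subst this
    simpa using hv

@[simp] lemma mkEdgePath_len (e : EdgeDir) {a b : V} (hv : edirValid G a b e) (hne : a ≠ b) :
    (mkEdgePath e hv hne).len = 1 := rfl

lemma mkEdgePath_vert (e : EdgeDir) {a b : V} (hv : edirValid G a b e) (hne : a ≠ b) (i : ℕ) :
    (mkEdgePath e hv hne).vert i = if i = 0 then a else b := rfl

def revPath {a b : V} (P : MPath G a b) : MPath G b a where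
  len := P.len
  len_pos := P.len_pos
  vert i := P.vert (P.len - i)
  edir i := flip (P.edir (P.len - i - 1))
  first := by simpa using P.last
  last := by simpa using P.first
  mem i _ := P.mem _ (by omega)
  inj i j hi hj hij := by
    have := P.inj _ _ (show P.len - i ≤ P.len by omega) (by omega) hij
    omega
  valid i hi := by
    have h := P.valid (P.len - i - 1) (by omega)
    have h1 : P.len - i - 1 + 1 = P.len - i := by omega
    rw [h1] at h
    have h2 : P.len - (i + 1) = P.len - i - 1 := by omega
    rw [h2]
    exact edirValid_flip h

@[simp] lemma revPath_len {a b : V} (P : MPath G a b) : (revPath P).len = P.len := rfl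
@[simp] lemma revPath_vert {a b : V} (P : MPath G a b) (i : ℕ) :
    (revPath P).vert i = P.vert (P.len - i) := rfl
@[simp] lemma revPath_edir {a b : V} (P : MPath G a b) (i : ℕ) :
    (revPath P).edir i = flip (P.edir (P.len - i - 1)) := rfl

lemma collider_revPath {a b : V} (P : MPath G a b) (m : ℕ) (hm0 : 0 < m) (hml : m < P.len) :
    (revPath P).collider m ↔ P.collider (P.len - m) := by
  unfold MPath.collider
  simp only [revPath_edir]
  have h1 : P.len - (m - 1) - 1 = P.len - m := by omega
  have h2 : P.len - m - 1 = P.len - m - 1 := rfl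
  rw [h1, headAt2_flip, headAt1_flip]
  exact ⟨fun ⟨u, w⟩ => ⟨w, u⟩, fun ⟨u, w⟩ => ⟨w, u⟩⟩

def subrev {a b : V} (P : MPath G a b) (k i : ℕ) (hik : i < k) (hk : k ≤ P.len) :
    MPath G (P.vert k) (P.vert i) where
  len := k - i
  len_pos := by omega
  vert m := P.vert (k - m)
  edir m := flip (P.edir (k - m - 1))
  first := by simp
  last := by
    have h : k - (k - i) = i := by omega
    rw [h]
  mem m _ := P.mem (k - m) (by omega)
  inj m j hm hj hmj := by
    have := P.inj _ _ (show k - m ≤ P.len by omega) (by omega) hmj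
    omega
  valid m hm := by
    have h := P.valid (k - m - 1) (by omega)
    have h1 : k - m - 1 + 1 = k - m := by omega
    rw [h1] at h
    have h2 : k - (m + 1) = k - m - 1 := by omega
    rw [h2]
    exact edirValid_flip h

@[simp] lemma subrev_len {a b : V} (P : MPath G a b) (k i : ℕ) (hik : i < k) (hk : k ≤ P.len) :
    (subrev P k i hik hk).len = k - i := rfl
@[simp] lemma subrev_vert {a b : V} (P : MPath G a b) (k i : ℕ) (hik : i < k) (hk : k ≤ P.len)
    (m : ℕ) : (subrev P k i hik hk).vert m = P.vert (k - m) := rfl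
@[simp] lemma subrev_edir {a b : V} (P : MPath G a b) (k i : ℕ) (hik : i < k) (hk : k ≤ P.len)
    (m : ℕ) : (subrev P k i hik hk).edir m = flip (P.edir (k - m - 1)) := rfl

lemma collider_subrev {a b : V} (P : MPath G a b) (k i : ℕ) (hik : i < k) (hk : k ≤ P.len)
    (m : ℕ) (hm0 : 0 < m) (hml : m < k - i) :
    (subrev P k i hik hk).collider m ↔ P.collider (k - m) := by
  unfold MPath.collider
  simp only [subrev_edir]
  have h1 : k - (m - 1) - 1 = k - m := by omega
  rw [h1, headAt2_flip, headAt1_flip]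
  exact ⟨fun ⟨u, w⟩ => ⟨w, u⟩, fun ⟨u, w⟩ => ⟨w, u⟩⟩

def appendEdge {a b c : V} (P : MPath G a b) (e : EdgeDir)
    (hv : edirValid G b c e) (hc : c ∈ G.verts) (hne : ∀ m ≤ P.len, P.vert m ≠ c) :
    MPath G a c where
  len := P.len + 1
  len_pos := by omega
  vert m := if m ≤ P.len then P.vert m else c
  edir m := if m < P.len then P.edir m else e
  first := by simp [P.first]
  last := by simp
  mem m _ := by
    by_cases h : m ≤ P.len
    · simpa [h] using P.mem m h
    · simpa [h] using hc
  inj m j hm hj hmj := by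
    by_cases h1 : m ≤ P.len <;> by_cases h2 : j ≤ P.len
    · rw [if_pos h1, if_pos h2] at hmj; exact P.inj _ _ h1 h2 hmj
    · rw [if_pos h1, if_neg h2] at hmj; exact absurd hmj (hne m h1)
    · rw [if_neg h1, if_pos h2] at hmj; exact absurd hmj.symm (hne j h2)
    · omega
  valid m hm := by
    by_cases h : m < P.len
    · rw [if_pos h, if_pos (by omega : m ≤ P.len), if_pos (by omega : m + 1 ≤ P.len)]
      exact P.valid m h
    · have hm' : m = P.len := by omega
      subst hm'
      rw [if_neg h, if_pos le_rfl, if_neg (by omega : ¬ P.len + 1 ≤ P.len)]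
      rw [P.last]
      exact hv

@[simp] lemma appendEdge_len {a b c : V} (P : MPath G a b) (e : EdgeDir)
    (hv : edirValid G b c e) (hc : c ∈ G.verts) (hne : ∀ m ≤ P.len, P.vert m ≠ c) :
    (appendEdge P e hv hc hne).len = P.len + 1 := rfl
lemma appendEdge_vert {a b c : V} (P : MPath G a b) (e : EdgeDir)
    (hv : edirValid G b c e) (hc : c ∈ G.verts) (hne : ∀ m ≤ P.len, P.vert m ≠ c) (m : ℕ) :
    (appendEdge P e hv hc hne).vert m = if m ≤ P.len then P.vert m else c := rfl
lemma appendEdge_edir {a b c : V} (P : MPath G a b) (e : EdgeDir)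
    (hv : edirValid G b c e) (hc : c ∈ G.verts) (hne : ∀ m ≤ P.len, P.vert m ≠ c) (m : ℕ) :
    (appendEdge P e hv hc hne).edir m = if m < P.len then P.edir m else e := rfl

end RemAux
namespace RemAux
open MixedGraph

variable {V : Type*} {G : MixedGraph V}

def spliceE {a b : V} (P : MPath G a b) (i j : ℕ) (e : EdgeDir)
    (hij : i < j) (hj : j ≤ P.len)
    (hv : edirValid G (P.vert i) (P.vert j) e) : MPath G a b where
  len := i + 1 + (P.len - j)
  len_pos := by omega
  vert m := if m ≤ i then P.vert m else P.vert (m - i - 1 + j)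
  edir m := if m < i then P.edir m else if m = i then e else P.edir (m - i - 1 + j)
  first := by
    rw [if_pos (Nat.zero_le i), P.first]
  last := by
    rw [if_neg (by omega)]
    have h : i + 1 + (P.len - j) - i - 1 + j = P.len := by omega
    rw [h, P.last]
  mem m hm := by
    by_cases h : m ≤ i
    · rw [if_pos h]; exact P.mem m (by omega)
    · rw [if_neg h]; exact P.mem _ (by omega)
  inj m m' hm hm' hmm' := by
    by_cases h1 : m ≤ i <;> by_cases h2 : m' ≤ i
    · rw [if_pos h1, if_pos h2] at hmm'
      exact P.inj _ _ (by omega) (by omega) hmm'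
    · rw [if_pos h1, if_neg h2] at hmm'
      have := P.inj _ _ (by omega) (by omega) hmm'
      omega
    · rw [if_neg h1, if_pos h2] at hmm'
      have := P.inj _ _ (by omega) (by omega) hmm'
      omega
    · rw [if_neg h1, if_neg h2] at hmm'
      have := P.inj _ _ (by omega) (by omega) hmm'
      omega
  valid m hm := by
    rcases lt_trichotomy m i with h | h | h
    · rw [if_pos (by omega : m ≤ i), if_pos (by omega : m + 1 ≤ i), if_pos h]
      exact P.valid m (by omega)
    · subst h
      rw [if_pos le_rfl, if_neg (by omega : ¬ m + 1 ≤ m), if_neg (lt_irrefl m), if_pos rfl]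
      have h2 : m + 1 - m - 1 + j = j := by omega
      rw [h2]
      exact hv
    · rw [if_neg (by omega : ¬ m ≤ i), if_neg (by omega : ¬ m + 1 ≤ i),
        if_neg (by omega : ¬ m < i), if_neg (by omega : m ≠ i)]
      have h2 : m + 1 - i - 1 + j = m - i - 1 + j + 1 := by omega
      rw [h2]
      exact P.valid _ (by omega)

@[simp] lemma spliceE_len {a b : V} (P : MPath G a b) (i j : ℕ) (e : EdgeDir)
    (hij : i < j) (hj : j ≤ P.len) (hv : edirValid G (P.vert i) (P.vert j) e) :
    (spliceE P i j e hij hj hv).len = i + 1 + (P.len - j) := rfl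
lemma spliceE_vert {a b : V} (P : MPath G a b) (i j : ℕ) (e : EdgeDir)
    (hij : i < j) (hj : j ≤ P.len) (hv : edirValid G (P.vert i) (P.vert j) e) (m : ℕ) :
    (spliceE P i j e hij hj hv).vert m
      = if m ≤ i then P.vert m else P.vert (m - i - 1 + j) := rfl
lemma spliceE_edir {a b : V} (P : MPath G a b) (i j : ℕ) (e : EdgeDir)
    (hij : i < j) (hj : j ≤ P.len) (hv : edirValid G (P.vert i) (P.vert j) e) (m : ℕ) :
    (spliceE P i j e hij hj hv).edir m
      = if m < i then P.edir m else if m = i then e else P.edir (m - i - 1 + j) := rfl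

def spliceV {a b : V} (P : MPath G a b) (i j : ℕ) (s : V) (eL eR : EdgeDir)
    (hij : i < j) (hj : j ≤ P.len)
    (hvL : edirValid G (P.vert i) s eL) (hvR : edirValid G s (P.vert j) eR)
    (hs : s ∈ G.verts)
    (hdist : ∀ m ≤ P.len, (m ≤ i ∨ j ≤ m) → P.vert m ≠ s) : MPath G a b where
  len := i + 2 + (P.len - j)
  len_pos := by omega
  vert m := if m ≤ i then P.vert m else if m = i + 1 then s else P.vert (m - i - 2 + j)
  edir m := if m < i then P.edir m else if m = i then eL else if m = i + 1 then eR
            else P.edir (m - i - 2 + j)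
  first := by
    rw [if_pos (Nat.zero_le i), P.first]
  last := by
    rw [if_neg (by omega), if_neg (by omega)]
    have h : i + 2 + (P.len - j) - i - 2 + j = P.len := by omega
    rw [h, P.last]
  mem m hm := by
    by_cases h : m ≤ i
    · rw [if_pos h]; exact P.mem m (by omega)
    · rw [if_neg h]
      by_cases h2 : m = i + 1
      · rw [if_pos h2]; exact hs
      · rw [if_neg h2]; exact P.mem _ (by omega)
  inj m m' hm hm' hmm' := by
    by_cases h1 : m ≤ i <;> by_cases h2 : m' ≤ i
    · rw [if_pos h1, if_pos h2] at hmm'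
      exact P.inj _ _ (by omega) (by omega) hmm'
    · rw [if_pos h1, if_neg h2] at hmm'
      by_cases h3 : m' = i + 1
      · rw [if_pos h3] at hmm'
        exact absurd hmm' (hdist m (by omega) (Or.inl h1))
      · rw [if_neg h3] at hmm'
        have := P.inj _ _ (by omega) (by omega) hmm'
        omega
    · rw [if_neg h1, if_pos h2] at hmm'
      by_cases h3 : m = i + 1
      · rw [if_pos h3] at hmm'
        exact absurd hmm'.symm (hdist m' (by omega) (Or.inl h2))
      · rw [if_neg h3] at hmm'
        have := P.inj _ _ (by omega) (by omega) hmm'.symm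
        omega
    · rw [if_neg h1, if_neg h2] at hmm'
      by_cases h3 : m = i + 1 <;> by_cases h4 : m' = i + 1
      · omega
      · rw [if_pos h3, if_neg h4] at hmm'
        exact absurd hmm'.symm (hdist _ (by omega) (Or.inr (by omega)))
      · rw [if_neg h3, if_pos h4] at hmm'
        exact absurd hmm' (hdist _ (by omega) (Or.inr (by omega)))
      · rw [if_neg h3, if_neg h4] at hmm'
        have := P.inj _ _ (by omega) (by omega) hmm'
        omega
  valid m hm := by
    rcases lt_trichotomy m i with h | h | h
    · rw [if_pos (by omega : m ≤ i), if_pos (by omega : m + 1 ≤ i), if_pos h]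
      exact P.valid m (by omega)
    · subst h
      rw [if_pos le_rfl, if_neg (by omega : ¬ m + 1 ≤ m), if_pos rfl,
        if_neg (lt_irrefl m), if_pos rfl]
      exact hvL
    · rcases Nat.lt_or_ge (i + 1) m with h' | h'
      · rw [if_neg (by omega : ¬ m ≤ i), if_neg (by omega : ¬ m + 1 ≤ i),
          if_neg (by omega : ¬ m = i + 1), if_neg (by omega : ¬ m + 1 = i + 1),
          if_neg (by omega : ¬ m < i), if_neg (by omega : m ≠ i),
          if_neg (by omega : m ≠ i + 1)]
        have h2 : m + 1 - i - 2 + j = m - i - 2 + j + 1 := by omega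
        rw [h2]
        exact P.valid _ (by omega)
      · have hm1 : m = i + 1 := by omega
        subst hm1
        rw [if_neg (by omega : ¬ i + 1 ≤ i), if_pos rfl, if_neg (by omega : ¬ i + 1 < i),
          if_neg (by omega : i + 1 ≠ i), if_pos rfl, if_neg (by omega : ¬ i + 1 + 1 ≤ i),
          if_neg (by omega : i + 1 + 1 ≠ i + 1)]
        have h2 : i + 1 + 1 - i - 2 + j = j := by omega
        rw [h2]
        exact hvR

@[simp] lemma spliceV_len {a b : V} (P : MPath G a b) (i j : ℕ) (s : V) (eL eR : EdgeDir)
    (hij : i < j) (hj : j ≤ P.len)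
    (hvL : edirValid G (P.vert i) s eL) (hvR : edirValid G s (P.vert j) eR)
    (hs : s ∈ G.verts) (hdist : ∀ m ≤ P.len, (m ≤ i ∨ j ≤ m) → P.vert m ≠ s) :
    (spliceV P i j s eL eR hij hj hvL hvR hs hdist).len = i + 2 + (P.len - j) := rfl
lemma spliceV_vert {a b : V} (P : MPath G a b) (i j : ℕ) (s : V) (eL eR : EdgeDir)
    (hij : i < j) (hj : j ≤ P.len)
    (hvL : edirValid G (P.vert i) s eL) (hvR : edirValid G s (P.vert j) eR)
    (hs : s ∈ G.verts) (hdist : ∀ m ≤ P.len, (m ≤ i ∨ j ≤ m) → P.vert m ≠ s) (m : ℕ) :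
    (spliceV P i j s eL eR hij hj hvL hvR hs hdist).vert m
      = if m ≤ i then P.vert m else if m = i + 1 then s else P.vert (m - i - 2 + j) := rfl
lemma spliceV_edir {a b : V} (P : MPath G a b) (i j : ℕ) (s : V) (eL eR : EdgeDir)
    (hij : i < j) (hj : j ≤ P.len)
    (hvL : edirValid G (P.vert i) s eL) (hvR : edirValid G s (P.vert j) eR)
    (hs : s ∈ G.verts) (hdist : ∀ m ≤ P.len, (m ≤ i ∨ j ≤ m) → P.vert m ≠ s) (m : ℕ) :
    (spliceV P i j s eL eR hij hj hvL hvR hs hdist).edir m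
      = if m < i then P.edir m else if m = i then eL else if m = i + 1 then eR
        else P.edir (m - i - 2 + j) := rfl

end RemAux
namespace RemAux
open MixedGraph

variable {V : Type*} {G : MixedGraph V}

lemma dir_ne (hG : G.IsMAG) {a b : V} (h : G.dir a b) : a ≠ b := by
  rintro rfl
  exact hG.no_dir_cycle a a h Relation.ReflTransGen.refl

lemma no2cycle (hG : G.IsMAG) {a b : V} (h1 : G.dir a b) (h2 : G.dir b a) : False :=
  hG.no_dir_cycle a b h1 (Relation.ReflTransGen.single h2)

lemma dichotomy (hG : G.IsMAG) {p t q : V} (hpt : G.dir p t) (hqt : q ≠ t)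
    (hadj : G.adj q t) (hqp : G.dir q p ∨ G.bi q p) :
    ∃ e, edirValid G q t e ∧ headAt2 e ∧ (headAt1 e → G.bi q p) := by
  rcases hadj with h | h | h
  · refine ⟨.fwd, h, Or.inl rfl, ?_⟩
    rintro (h1 | h1) <;> exact EdgeDir.noConfusion h1
  · rcases hqp with hd | hb
    · exact absurd (Relation.ReflTransGen.tail (Relation.ReflTransGen.single hd) hpt)
        (hG.no_dir_cycle t q h)
    · exact absurd (Relation.ReflTransGen.tail (Relation.ReflTransGen.single hpt) h)
        (hG.no_almost_dir_cycle q p hb)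
  · rcases hqp with hd | hb
    · exact absurd (Relation.ReflTransGen.tail (Relation.ReflTransGen.single hd) hpt)
        (hG.no_almost_dir_cycle t q (G.bi_symm h))
    · exact ⟨.bidir, h, Or.inr rfl, fun _ => hb⟩

/-- Activity (non-blockedness pointwise) of a path w.r.t. fixed `y z Z`. -/
def Act (G : MixedGraph V) (y z : V) (Z : Set V) {u v : V} (P : MPath G u v) : Prop :=
  ∀ m, 0 < m → m < P.len →
    (P.collider m → ∃ w, (w ∈ Z ∨ w = y ∨ w = z) ∧ G.anc (P.vert m) w) ∧
    (¬ P.collider m → P.vert m ∉ Z)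

lemma mem_pair_iff {y z u v : V} {Z : Set V} (huv : (u = y ∧ v = z) ∨ (u = z ∧ v = y)) (w : V) :
    w ∈ Z ∪ ({u, v} : Set V) ↔ (w ∈ Z ∨ w = y ∨ w = z) := by
  rcases huv with ⟨rfl, rfl⟩ | ⟨rfl, rfl⟩ <;>
    simp only [Set.mem_union, Set.mem_insert_iff, Set.mem_singleton_iff] <;> tauto

lemma not_blocked_of_act {y z u v : V} {Z : Set V} (P : MPath G u v)
    (huv : (u = y ∧ v = z) ∨ (u = z ∧ v = y)) (h : Act G y z Z P) : ¬ P.blocked Z := by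
  rintro ⟨m, hm0, hml, hbl⟩
  rcases hbl with ⟨hc, hnone⟩ | ⟨hnc, hmem⟩
  · obtain ⟨w, hw, hanc⟩ := (h m hm0 hml).1 hc
    exact hnone w ((mem_pair_iff huv w).mpr hw) hanc
  · exact (h m hm0 hml).2 hnc hmem

lemma act_of_not_blocked {y z u v : V} {Z : Set V} (P : MPath G u v)
    (huv : (u = y ∧ v = z) ∨ (u = z ∧ v = y)) (h : ¬ P.blocked Z) : Act G y z Z P := by
  intro m hm0 hml
  constructor
  · intro hc
    by_contra hno
    push_neg at hno
    exact h ⟨m, hm0, hml, Or.inl ⟨hc, fun w hw => hno w ((mem_pair_iff huv w).mp hw)⟩⟩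
  · intro hnc hmem
    exact h ⟨m, hm0, hml, Or.inr ⟨hnc, hmem⟩⟩

lemma act_revPath {y z u v : V} {Z : Set V} {P : MPath G u v} (h : Act G y z Z P) :
    Act G y z Z (revPath P) := by
  intro m hm0 hml
  simp only [revPath_len] at hml
  rw [collider_revPath P m hm0 hml]
  simp only [revPath_vert]
  exact h (P.len - m) (by omega) (by omega)

/-- Convert a path of `G` into a path of an induced subgraph. -/
def toInduce {y' z' : V} (W : Set V) (P : MPath G y' z') (h : ∀ m ≤ P.len, P.vert m ∈ W) :
    MPath (G.induce W) y' z' where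
  len := P.len
  len_pos := P.len_pos
  vert := P.vert
  edir := P.edir
  first := P.first
  last := P.last
  mem m hm := ⟨P.mem m hm, h m hm⟩
  inj := P.inj
  valid m hm := by
    have hv := P.valid m hm
    have h1 := h m (by omega)
    have h2 := h (m + 1) (by omega)
    cases he : P.edir m with
    | fwd => rw [he] at hv; exact ⟨hv, h1, h2⟩
    | bwd => rw [he] at hv; exact ⟨hv, h2, h1⟩
    | bidir => rw [he] at hv; exact ⟨hv, h1, h2⟩

@[simp] lemma toInduce_len {y' z' : V} (W : Set V) (P : MPath G y' z')
    (h : ∀ m ≤ P.len, P.vert m ∈ W) : (toInduce W P h).len = P.len := rfl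
@[simp] lemma toInduce_vert {y' z' : V} (W : Set V) (P : MPath G y' z')
    (h : ∀ m ≤ P.len, P.vert m ∈ W) (m : ℕ) : (toInduce W P h).vert m = P.vert m := rfl
@[simp] lemma toInduce_collider {y' z' : V} (W : Set V) (P : MPath G y' z')
    (h : ∀ m ≤ P.len, P.vert m ∈ W) (m : ℕ) :
    (toInduce W P h).collider m ↔ P.collider m := Iff.rfl

/-- Convert a path of an induced subgraph into a path of `G`. -/
def ofInduce {y' z' : V} {W : Set V} (P : MPath (G.induce W) y' z') : MPath G y' z' where
  len := P.len
  len_pos := P.len_pos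
  vert := P.vert
  edir := P.edir
  first := P.first
  last := P.last
  mem m hm := (P.mem m hm).1
  inj := P.inj
  valid m hm := by
    have hv := P.valid m hm
    cases he : P.edir m with
    | fwd => rw [he] at hv; exact hv.1
    | bwd => rw [he] at hv; exact hv.1
    | bidir => rw [he] at hv; exact hv.1

@[simp] lemma ofInduce_len {y' z' : V} {W : Set V} (P : MPath (G.induce W) y' z') :
    (ofInduce P).len = P.len := rfl
@[simp] lemma ofInduce_vert {y' z' : V} {W : Set V} (P : MPath (G.induce W) y' z') (m : ℕ) :
    (ofInduce P).vert m = P.vert m := rfl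
@[simp] lemma ofInduce_collider {y' z' : V} {W : Set V} (P : MPath (G.induce W) y' z') (m : ℕ) :
    (ofInduce P).collider m ↔ P.collider m := Iff.rfl

lemma anc_induce_mono {W : Set V} {a b : V} (h : (G.induce W).anc a b) : G.anc a b :=
  Relation.ReflTransGen.mono (fun _ _ hd => hd.1) _ _ h

lemma chain_out (hG : G.IsMAG) (x : V)
    (hshort : ∀ p s, G.dir p x → G.dir x s → G.dir p s) :
    ∀ (n : ℕ) (c w : V) (l : List V), l.length ≤ n → c ≠ x → w ≠ x →
      List.Chain G.dir c l → (c :: l).getLast (List.cons_ne_nil c l) = w →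
      Relation.ReflTransGen (fun a b => G.dir a b ∧ a ≠ x ∧ b ≠ x) c w := by
  intro n
  induction n with
  | zero =>
    intro c w l hl hc hw hch hlast
    have hnil : l = [] := List.length_eq_zero_iff.mp (by omega)
    subst hnil
    simp at hlast
    subst hlast
    exact Relation.ReflTransGen.refl
  | succ n ih =>
    intro c w l hl hc hw hch hlast
    match l with
    | [] =>
      simp at hlast
      subst hlast
      exact Relation.ReflTransGen.refl
    | d :: l' =>
      obtain ⟨hcd, hch'⟩ := List.chain_cons.mp hch
      have hlast' : (d :: l').getLast (List.cons_ne_nil d l') = w := by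
        rw [List.getLast_cons (List.cons_ne_nil d l')] at hlast
        exact hlast
      by_cases hd : d = x
      · match l' with
        | [] =>
          simp at hlast'
          exact absurd (hlast'.symm.trans hd) hw
        | s :: l'' =>
          obtain ⟨hxs, hch''⟩ := List.chain_cons.mp hch'
          have hxs' : G.dir x s := hd ▸ hxs
          have hcs : G.dir c s := hshort c s (hd ▸ hcd) hxs'
          have hsx : s ≠ x := fun h => no2cycle hG (h ▸ hxs') (h ▸ hxs')
          refine ih c w (s :: l'') (by simp at hl ⊢; omega) hc hw
            (List.chain_cons.mpr ⟨hcs, hch''⟩) ?_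
          rw [List.getLast_cons (List.cons_ne_nil s l'')] at hlast' ⊢
          exact hlast'
      · exact Relation.ReflTransGen.head ⟨hcd, hc, hd⟩
          (ih d w l' (by simp at hl; omega) hd hw hch' hlast')

lemma anc_avoid (hG : G.IsMAG) (x : V)
    (hshort : ∀ p s, G.dir p x → G.dir x s → G.dir p s)
    {c w : V} (hc : c ≠ x) (hw : w ≠ x) (h : G.anc c w) :
    (G.induce (G.verts \ {x})).anc c w := by
  obtain ⟨l, hl, hlast⟩ := List.exists_isChain_cons_of_relationReflTransGen h
  have key := chain_out hG x hshort l.length c w l le_rfl hc hw hl hlast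
  refine Relation.ReflTransGen.mono ?_ c w key
  rintro a b ⟨hab, ha, hb⟩
  exact ⟨hab, ⟨(G.dir_mem hab).1, ha⟩, ⟨(G.dir_mem hab).2, hb⟩⟩

end RemAux
namespace RemAux
open MixedGraph

variable {V : Type*} {G : MixedGraph V}

/-- The removability condition of the theorem. -/
def Cond (G : MixedGraph V) (x : V) : Prop :=
  ∀ (y : V) (p : MPath G x y), p.isColliderPath →
    ∀ z ∈ G.verts, (∀ i, i ≤ p.len → p.vert i ≠ z) →
      (∀ i, i < p.len → G.dir (p.vert i) z) → G.adj y z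

lemma not_dir_and_bi (hG : G.IsMAG) {a b : V} (hd : G.dir a b) (hb : G.bi a b) : False :=
  hG.no_almost_dir_cycle b a (G.bi_symm hb) (Relation.ReflTransGen.single hd)

lemma C0 (hG : G.IsMAG) {x : V} (hC : Cond G x) {a t : V} (hxa : G.adj x a) (hax : a ≠ x)
    (hxt : G.dir x t) (ht : t ∈ G.verts) (hat : a ≠ t) : G.adj a t := by
  have hxt' : x ≠ t := dir_ne hG hxt
  have hv : ∃ e, edirValid G x a e := by
    rcases hxa with h | h | h
    exacts [⟨.fwd, h⟩, ⟨.bwd, h⟩, ⟨.bidir, h⟩]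
  obtain ⟨e, hv⟩ := hv
  refine hC a (mkEdgePath e hv hax.symm) ?_ t ht ?_ ?_
  · intro i hi0 hil
    simp at hil
    omega
  · intro i _
    rw [mkEdgePath_vert]
    by_cases h : i = 0
    · simpa [h] using hxt'
    · simpa [h] using hat
  · intro i hi
    simp at hi
    subst hi
    rw [mkEdgePath_vert]
    simpa using hxt

lemma shortcut (hG : G.IsMAG) {x : V} (hC : Cond G x) :
    ∀ p s, G.dir p x → G.dir x s → G.dir p s := by
  intro p s hpx hxs
  have hps : p ≠ s := by
    rintro rfl
    exact no2cycle hG hpx hxs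
  have hadj : G.adj p s :=
    C0 hG hC (Or.inr (Or.inl hpx)) (dir_ne hG hpx) hxs (G.dir_mem hxs).2 hps
  rcases hadj with h | h | h
  · exact h
  · exact absurd (Relation.ReflTransGen.tail (Relation.ReflTransGen.single hxs) h)
      (hG.no_dir_cycle p x hpx)
  · exact absurd (Relation.ReflTransGen.tail (Relation.ReflTransGen.single hpx) hxs)
      (hG.no_almost_dir_cycle s p (G.bi_symm h))

lemma CC {x : V} (hC : Cond G x) {a b : V} (P : MPath G a b) (k i : ℕ) (hik : i < k)
    (hk : k ≤ P.len) (hxk : P.vert k = x) (t : V) (ht : t ∈ G.verts)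
    (hdist : ∀ m, i ≤ m → m ≤ k → P.vert m ≠ t)
    (hcol : ∀ j, i < j → j < k → P.collider j)
    (hdirx : G.dir x t) (hdir : ∀ j, i < j → j < k → G.dir (P.vert j) t) :
    G.adj (P.vert i) t := by
  subst hxk
  refine hC (P.vert i) (subrev P k i hik hk) ?_ t ht ?_ ?_
  · intro m hm0 hml
    simp only [subrev_len] at hml
    rw [collider_subrev P k i hik hk m hm0 hml]
    exact hcol (k - m) (by omega) (by omega)
  · intro m hm
    simp only [subrev_len] at hm
    rw [subrev_vert]
    exact hdist (k - m) (by omega) (by omega)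
  · intro m hm
    simp only [subrev_len] at hm
    rw [subrev_vert]
    by_cases h : m = 0
    · subst h
      simpa using hdirx
    · exact hdir (k - m) (by omega) (by omega)

lemma walkLeft (hG : G.IsMAG) {x : V} (hC : Cond G x) {y z u v : V} {Z : Set V}
    (P : MPath G u v) (hAct : Act G y z Z P) (k : ℕ) (hk : k ≤ P.len)
    (hxk : P.vert k = x) (t : V) (ht : t ∈ G.verts) (hxt : G.dir x t)
    (hdist : ∀ m ≤ k, P.vert m ≠ t) :
    ∀ i, i < k → G.dir (P.vert (i + 1)) t → headAt2 (P.edir i) →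
      (∀ j, i < j → j < k → P.collider j ∧ G.dir (P.vert j) t) →
      ∃ i' ≤ i, ∃ e, edirValid G (P.vert i') t e ∧ headAt2 e ∧
        (0 < i' →
          ((headAt2 (P.edir (i' - 1)) ∧ headAt1 e) →
            ∃ w, (w ∈ Z ∨ w = y ∨ w = z) ∧ G.anc (P.vert i') w) ∧
          (¬ (headAt2 (P.edir (i' - 1)) ∧ headAt1 e) → P.vert i' ∉ Z)) := by
  intro i
  induction i using Nat.strong_induction_on with
  | _ i ih =>
    intro hik hdirnext hh2 hinv
    have hadj : G.adj (P.vert i) t :=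
      CC hC P k i hik hk hxk t ht (fun m _ hm2 => hdist m hm2)
        (fun j h1 h2 => (hinv j h1 h2).1) hxt (fun j h1 h2 => (hinv j h1 h2).2)
    have hvalid := P.valid i (by omega)
    have hqp : G.dir (P.vert i) (P.vert (i + 1)) ∨ G.bi (P.vert i) (P.vert (i + 1)) := by
      rcases hh2 with h | h
      · rw [h] at hvalid; exact Or.inl hvalid
      · rw [h] at hvalid; exact Or.inr hvalid
    have hne : P.vert i ≠ t := hdist i (by omega)
    obtain ⟨e, hev, he2, he1⟩ := dichotomy hG hdirnext hne hadj hqp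
    have hh1' : headAt1 e → headAt1 (P.edir i) := by
      intro hh1
      have hbi := he1 hh1
      rcases hh2 with h | h
      · rw [h] at hvalid
        exact absurd hbi (fun hb => not_dir_and_bi hG hvalid hb)
      · rw [h]
        exact Or.inr rfl
    by_cases hi0 : i = 0
    · exact ⟨i, le_rfl, e, hev, he2, fun h0 => absurd h0 (by omega)⟩
    · by_cases hcoll : P.collider i
      · by_cases hh1 : headAt1 e
        · refine ⟨i, le_rfl, e, hev, he2, fun _ => ⟨?_, ?_⟩⟩
          · intro _
            exact (hAct i (by omega) (by omega)).1 hcoll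
          · intro hcon
            exact absurd ⟨hcoll.1, hh1⟩ hcon
        · have hdir_i : G.dir (P.vert i) t := by
            have hef : e = .fwd := by
              cases e with
              | fwd => rfl
              | bwd => rcases he2 with h | h <;> exact EdgeDir.noConfusion h
              | bidir => exact absurd (Or.inr rfl) hh1
            rw [hef] at hev
            exact hev
          obtain ⟨i', hi'le, rest⟩ := ih (i - 1) (by omega) (by omega)
            (by rw [show i - 1 + 1 = i by omega]; exact hdir_i) hcoll.1
            (by
              intro j h1 h2
              rcases eq_or_lt_of_le (show i ≤ j by omega) with h | h
              · exact ⟨h ▸ hcoll, h ▸ hdir_i⟩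
              · exact hinv j h h2)
          exact ⟨i', by omega, rest⟩
      · refine ⟨i, le_rfl, e, hev, he2, fun _ => ⟨?_, ?_⟩⟩
        · rintro ⟨hL, hh1⟩
          exact absurd ⟨hL, hh1' hh1⟩ hcoll
        · intro _
          exact (hAct i (by omega) (by omega)).2 hcoll

end RemAux
namespace RemAux
open MixedGraph

variable {V : Type*} {G : MixedGraph V}

lemma act_spliceE {y z u v : V} {Z : Set V} (P : MPath G u v) (hAct : Act G y z Z P)
    (i j : ℕ) (e : EdgeDir) (hij : i < j) (hj : j ≤ P.len)
    (hv : edirValid G (P.vert i) (P.vert j) e)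
    (SAi : 0 < i →
      ((headAt2 (P.edir (i - 1)) ∧ headAt1 e) →
        ∃ w, (w ∈ Z ∨ w = y ∨ w = z) ∧ G.anc (P.vert i) w) ∧
      (¬ (headAt2 (P.edir (i - 1)) ∧ headAt1 e) → P.vert i ∉ Z))
    (SAj : j < P.len →
      ((headAt2 e ∧ headAt1 (P.edir j)) →
        ∃ w, (w ∈ Z ∨ w = y ∨ w = z) ∧ G.anc (P.vert j) w) ∧
      (¬ (headAt2 e ∧ headAt1 (P.edir j)) → P.vert j ∉ Z)) :
    Act G y z Z (spliceE P i j e hij hj hv) := by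
  intro m hm0 hml
  simp only [spliceE_len] at hml
  unfold MPath.collider
  rcases lt_trichotomy m i with hmi | hmi | hmi
  · rw [spliceE_edir, spliceE_edir, if_pos (by omega : m - 1 < i), if_pos hmi,
      spliceE_vert, if_pos (by omega : m ≤ i)]
    exact hAct m hm0 (by omega)
  · subst hmi
    rw [spliceE_edir, spliceE_edir, if_pos (by omega : m - 1 < m), if_neg (lt_irrefl m),
      if_pos rfl, spliceE_vert, if_pos le_rfl]
    exact SAi hm0
  · rcases Nat.lt_or_ge (i + 1) m with hm1 | hm1
    · have harr : m - 1 - i - 1 + j = m - i - 1 + j - 1 := by omega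
      rw [spliceE_edir, spliceE_edir, if_neg (by omega : ¬ m - 1 < i),
        if_neg (by omega : m - 1 ≠ i), if_neg (by omega : ¬ m < i), if_neg (by omega : m ≠ i),
        spliceE_vert, if_neg (by omega : ¬ m ≤ i), harr]
      exact hAct (m - i - 1 + j) (by omega) (by omega)
    · have hm1' : m = i + 1 := by omega
      subst hm1'
      rw [spliceE_edir, spliceE_edir, if_neg (by omega : ¬ i + 1 - 1 < i),
        if_pos (by omega : i + 1 - 1 = i), if_neg (by omega : ¬ i + 1 < i),
        if_neg (by omega : i + 1 ≠ i), spliceE_vert, if_neg (by omega : ¬ i + 1 ≤ i)]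
      have hjj : i + 1 - i - 1 + j = j := by omega
      rw [hjj]
      exact SAj (by omega)

lemma act_spliceV {y z u v : V} {Z : Set V} (P : MPath G u v) (hAct : Act G y z Z P)
    (i j : ℕ) (s : V) (eL eR : EdgeDir) (hij : i < j) (hj : j ≤ P.len)
    (hvL : edirValid G (P.vert i) s eL) (hvR : edirValid G s (P.vert j) eR)
    (hs : s ∈ G.verts) (hdist : ∀ m ≤ P.len, (m ≤ i ∨ j ≤ m) → P.vert m ≠ s)
    (hmid : headAt2 eL ∧ headAt1 eR)
    (hanc : ∃ w, (w ∈ Z ∨ w = y ∨ w = z) ∧ G.anc s w)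
    (SAi : 0 < i →
      ((headAt2 (P.edir (i - 1)) ∧ headAt1 eL) →
        ∃ w, (w ∈ Z ∨ w = y ∨ w = z) ∧ G.anc (P.vert i) w) ∧
      (¬ (headAt2 (P.edir (i - 1)) ∧ headAt1 eL) → P.vert i ∉ Z))
    (SAj : j < P.len →
      ((headAt2 eR ∧ headAt1 (P.edir j)) →
        ∃ w, (w ∈ Z ∨ w = y ∨ w = z) ∧ G.anc (P.vert j) w) ∧
      (¬ (headAt2 eR ∧ headAt1 (P.edir j)) → P.vert j ∉ Z)) :
    Act G y z Z (spliceV P i j s eL eR hij hj hvL hvR hs hdist) := by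
  intro m hm0 hml
  simp only [spliceV_len] at hml
  unfold MPath.collider
  rcases lt_trichotomy m i with hmi | hmi | hmi
  · rw [spliceV_edir, spliceV_edir, if_pos (by omega : m - 1 < i), if_pos hmi,
      spliceV_vert, if_pos (by omega : m ≤ i)]
    exact hAct m hm0 (by omega)
  · subst hmi
    rw [spliceV_edir, spliceV_edir, if_pos (by omega : m - 1 < m), if_neg (lt_irrefl m),
      if_pos rfl, spliceV_vert, if_pos le_rfl]
    exact SAi hm0
  · rcases Nat.lt_or_ge m (i + 2) with hm1 | hm1
    · have hm1' : m = i + 1 := by omega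
      subst hm1'
      rw [spliceV_edir, spliceV_edir, if_neg (by omega : ¬ i + 1 - 1 < i),
        if_pos (by omega : i + 1 - 1 = i), if_neg (by omega : ¬ i + 1 < i),
        if_neg (by omega : i + 1 ≠ i), if_pos rfl,
        spliceV_vert, if_neg (by omega : ¬ i + 1 ≤ i), if_pos rfl]
      exact ⟨fun _ => hanc, fun hnc => absurd hmid hnc⟩
    · rcases Nat.lt_or_ge (i + 2) m with hm2 | hm2
      · have harr : m - 1 - i - 2 + j = m - i - 2 + j - 1 := by omega
        rw [spliceV_edir, spliceV_edir, if_neg (by omega : ¬ m - 1 < i),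
          if_neg (by omega : m - 1 ≠ i), if_neg (by omega : m - 1 ≠ i + 1),
          if_neg (by omega : ¬ m < i), if_neg (by omega : m ≠ i),
          if_neg (by omega : m ≠ i + 1), spliceV_vert, if_neg (by omega : ¬ m ≤ i),
          if_neg (by omega : m ≠ i + 1), harr]
        exact hAct (m - i - 2 + j) (by omega) (by omega)
      · have hm2' : m = i + 2 := by omega
        subst hm2'
        rw [spliceV_edir, spliceV_edir, if_neg (by omega : ¬ i + 2 - 1 < i),
          if_neg (by omega : i + 2 - 1 ≠ i), if_pos (by omega : i + 2 - 1 = i + 1),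
          if_neg (by omega : ¬ i + 2 < i), if_neg (by omega : i + 2 ≠ i),
          if_neg (by omega : i + 2 ≠ i + 1), spliceV_vert, if_neg (by omega : ¬ i + 2 ≤ i),
          if_neg (by omega : i + 2 ≠ i + 1)]
        have hjj : i + 2 - i - 2 + j = j := by omega
        rw [hjj]
        exact SAj (by omega)

end RemAux
namespace RemAux
open MixedGraph

variable {V : Type*} {G : MixedGraph V}

lemma walkRight (hG : G.IsMAG) {x : V} (hC : Cond G x) {y z u v : V} {Z : Set V}
    (P : MPath G u v) (hAct : Act G y z Z P) (k : ℕ) (hk0 : 0 < k) (hkl : k < P.len)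
    (hxk : P.vert k = x) (hrho : headAt1 (P.edir k))
    (t : V) (ht : t ∈ G.verts) (hxt : G.dir x t)
    (hdist : ∀ m, k ≤ m → m ≤ P.len → P.vert m ≠ t) :
    ∃ j, k + 1 ≤ j ∧ j ≤ P.len ∧ ∃ e, edirValid G t (P.vert j) e ∧ headAt1 e ∧
      (j < P.len →
        ((headAt2 e ∧ headAt1 (P.edir j)) →
          ∃ w, (w ∈ Z ∨ w = y ∨ w = z) ∧ G.anc (P.vert j) w) ∧
        (¬ (headAt2 e ∧ headAt1 (P.edir j)) → P.vert j ∉ Z)) := by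
  have hxkR : (revPath P).vert (P.len - k) = x := by
    rw [revPath_vert, Nat.sub_sub_self hkl.le]
    exact hxk
  have hdistR : ∀ m ≤ P.len - k, (revPath P).vert m ≠ t := by
    intro m hm
    rw [revPath_vert]
    exact hdist (P.len - m) (by omega) (by omega)
  have hstart2 : headAt2 ((revPath P).edir (P.len - k - 1)) := by
    rw [revPath_edir, show P.len - (P.len - k - 1) - 1 = k by omega, headAt2_flip]
    exact hrho
  obtain ⟨iR, hiRle, e', hev', he2', SA'⟩ :=
    walkLeft hG hC (revPath P) (act_revPath hAct) (P.len - k) (by simp)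
      hxkR t ht hxt hdistR (P.len - k - 1) (by omega)
      (by rw [show P.len - k - 1 + 1 = P.len - k by omega]; rw [hxkR]; exact hxt)
      hstart2 (fun j h1 h2 => absurd h1 (by omega))
  rw [revPath_vert] at hev'
  refine ⟨P.len - iR, by omega, by omega, flip e', ?_, ?_, ?_⟩
  · exact edirValid_flip hev'
  · rw [headAt1_flip]; exact he2'
  · intro hjl
    have hiR0 : 0 < iR := by omega
    obtain ⟨A, B⟩ := SA' hiR0
    rw [revPath_edir, revPath_vert, show P.len - (iR - 1) - 1 = P.len - iR by omega,
      headAt2_flip] at A B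
    constructor
    · rintro ⟨h2f, h1⟩
      rw [headAt2_flip] at h2f
      exact A ⟨h1, h2f⟩
    · intro hn
      refine B ?_
      rintro ⟨h1, h2f⟩
      rw [← headAt2_flip] at h2f
      exact hn ⟨h2f, h1⟩

lemma caseRhoTail (hG : G.IsMAG) {x : V} (hC : Cond G x) {y z u v : V} {Z : Set V}
    (P : MPath G u v) (hAct : Act G y z Z P) (k : ℕ) (hk0 : 0 < k) (hkl : k < P.len)
    (hxk : P.vert k = x) (heR : P.edir k = .fwd)
    (hstart : headAt2 (P.edir (k - 1)) ∨ G.dir (P.vert (k - 1)) (P.vert (k + 1))) :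
    ∃ P' : MPath G u v, Act G y z Z P' ∧ P'.len < P.len := by
  have hvk := P.valid k hkl
  rw [heR, hxk] at hvk
  have hbv : P.vert (k + 1) ∈ G.verts := P.mem (k + 1) (by omega)
  have hdistb : ∀ m ≤ k, P.vert m ≠ P.vert (k + 1) := fun m hm heq => by
    have := P.inj m (k + 1) (by omega) (by omega) heq
    omega
  have hwalk : ∃ i' ≤ k - 1, ∃ e, edirValid G (P.vert i') (P.vert (k + 1)) e ∧ headAt2 e ∧
      (0 < i' →
        ((headAt2 (P.edir (i' - 1)) ∧ headAt1 e) →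
          ∃ w, (w ∈ Z ∨ w = y ∨ w = z) ∧ G.anc (P.vert i') w) ∧
        (¬ (headAt2 (P.edir (i' - 1)) ∧ headAt1 e) → P.vert i' ∉ Z)) := by
    rcases hstart with hl | hab
    · exact walkLeft hG hC P hAct k hkl.le hxk (P.vert (k + 1)) hbv hvk hdistb (k - 1)
        (by omega) (by rw [show k - 1 + 1 = k by omega, hxk]; exact hvk) hl
        (fun j h1 h2 => absurd h1 (by omega))
    · by_cases hcol : 0 < k - 1 ∧ P.collider (k - 1)
      · have hc21 : headAt2 (P.edir (k - 2)) := by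
          have := hcol.2.1
          rwa [show k - 1 - 1 = k - 2 by omega] at this
        obtain ⟨i', h1, rest⟩ := walkLeft hG hC P hAct k hkl.le hxk (P.vert (k + 1)) hbv hvk
          hdistb (k - 2) (by omega) (by rw [show k - 2 + 1 = k - 1 by omega]; exact hab) hc21
          (by
            intro j hj1 hj2
            have hj : j = k - 1 := by omega
            exact hj ▸ ⟨hcol.2, hab⟩)
        exact ⟨i', by omega, rest⟩
      · refine ⟨k - 1, le_rfl, .fwd, hab, Or.inl rfl, ?_⟩
        intro h0
        constructor
        · rintro ⟨-, h1⟩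
          rcases h1 with h1 | h1 <;> exact EdgeDir.noConfusion h1
        · intro _
          have hnc : ¬ P.collider (k - 1) := fun hcc => hcol ⟨h0, hcc⟩
          exact (hAct (k - 1) h0 (by omega)).2 hnc
  obtain ⟨i', hi'le, e, hev, he2, SA⟩ := hwalk
  refine ⟨spliceE P i' (k + 1) e (by omega) (by omega) hev, ?_, ?_⟩
  · refine act_spliceE P hAct i' (k + 1) e (by omega) (by omega) hev SA ?_
    intro hlt
    constructor
    · rintro ⟨-, h1⟩
      exact (hAct (k + 1) (by omega) hlt).1
        ⟨by rw [show k + 1 - 1 = k by omega, heR]; exact Or.inl rfl, h1⟩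
    · intro hn
      refine (hAct (k + 1) (by omega) hlt).2 ?_
      rintro ⟨h2', h1'⟩
      exact hn ⟨he2, h1'⟩
  · rw [spliceE_len]; omega

lemma caseCollider (hG : G.IsMAG) {x : V} (hC : Cond G x) {y z u v : V} {Z : Set V}
    (hyx : y ≠ x) (hzx : z ≠ x) (hZx : x ∉ Z)
    (P : MPath G u v) (hAct : Act G y z Z P) (k : ℕ) (hk0 : 0 < k) (hkl : k < P.len)
    (hxk : P.vert k = x)
    (hlam : headAt2 (P.edir (k - 1))) (hrho : headAt1 (P.edir k)) :
    ∃ P' : MPath G u v, Act G y z Z P' ∧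
      (P'.len < P.len ∨ (P'.len ≤ P.len ∧ ∀ m ≤ P'.len, P'.vert m ≠ x)) := by
  have hcolk : P.collider k := ⟨hlam, hrho⟩
  obtain ⟨w, hwmem, hancw⟩ := (hAct k hk0 hkl).1 hcolk
  rw [hxk] at hancw
  have hwx : w ≠ x := by
    rcases hwmem with h | h | h
    · exact fun he => hZx (he ▸ h)
    · exact h ▸ hyx
    · exact h ▸ hzx
  obtain ⟨s, hxs, hsw⟩ : ∃ s, G.dir x s ∧ G.anc s w := by
    rcases Relation.ReflTransGen.cases_head hancw with heq | ⟨s, h1, h2⟩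
    · exact absurd heq.symm hwx
    · exact ⟨s, h1, h2⟩
  have hsx : s ≠ x := (dir_ne hG hxs).symm
  have hsv : s ∈ G.verts := (G.dir_mem hxs).2
  have hancs : ∃ w', (w' ∈ Z ∨ w' = y ∨ w' = z) ∧ G.anc s w' := ⟨w, hwmem, hsw⟩
  by_cases hq : ∃ q ≤ P.len, P.vert q = s
  · obtain ⟨q, hql, hqs⟩ := hq
    have hqk : q ≠ k := fun h => hsx (hqs ▸ (h ▸ hxk : P.vert q = x))
    rcases Nat.lt_or_ge q k with hqlt | hqge
    · have hdistR : ∀ m, k ≤ m → m ≤ P.len → P.vert m ≠ s := fun m h1 h2 heq => by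
        have := P.inj m q h2 hql (heq.trans hqs.symm)
        omega
      obtain ⟨j, hj1, hj2, e, hev, he1, SAj⟩ :=
        walkRight hG hC P hAct k hk0 hkl hxk hrho s hsv hxs hdistR
      refine ⟨spliceE P q j e (by omega) hj2 (by rw [hqs]; exact hev), ?_, Or.inl ?_⟩
      · refine act_spliceE P hAct q j e (by omega) hj2 _ ?_ SAj
        intro h0
        constructor
        · rintro ⟨-, -⟩
          exact ⟨w, hwmem, by rw [hqs]; exact hsw⟩
        · intro hn
          exact (hAct q h0 (by omega)).2 (fun hcc => hn ⟨hcc.1, he1⟩)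
      · rw [spliceE_len]; omega
    · have hkq : k < q := by omega
      have hdistL : ∀ m ≤ k, P.vert m ≠ s := fun m hm heq => by
        have := P.inj m q (by omega) hql (heq.trans hqs.symm)
        omega
      obtain ⟨iL, hiLle, e, hev, he2, SAi⟩ := walkLeft hG hC P hAct k hkl.le hxk s hsv hxs
        hdistL (k - 1) (by omega) (by rw [show k - 1 + 1 = k by omega, hxk]; exact hxs) hlam
        (fun j h1 h2 => absurd h1 (by omega))
      refine ⟨spliceE P iL q e (by omega) hql (by rw [hqs]; exact hev), ?_, Or.inl ?_⟩
      · refine act_spliceE P hAct iL q e (by omega) hql _ SAi ?_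
        intro hqlen
        constructor
        · rintro ⟨-, -⟩
          exact ⟨w, hwmem, by rw [hqs]; exact hsw⟩
        · intro hn
          exact (hAct q (by omega) hqlen).2 (fun hcc => hn ⟨he2, hcc.2⟩)
      · rw [spliceE_len]; omega
  · push_neg at hq
    have hdistL : ∀ m ≤ k, P.vert m ≠ s := fun m hm => hq m (by omega)
    have hdistR : ∀ m, k ≤ m → m ≤ P.len → P.vert m ≠ s := fun m _ h2 => hq m h2
    obtain ⟨iL, hiLle, eL, hevL, he2L, SAi⟩ := walkLeft hG hC P hAct k hkl.le hxk s hsv hxs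
      hdistL (k - 1) (by omega) (by rw [show k - 1 + 1 = k by omega, hxk]; exact hxs) hlam
      (fun j h1 h2 => absurd h1 (by omega))
    obtain ⟨j, hj1, hj2, eR, hevR, he1R, SAj⟩ :=
      walkRight hG hC P hAct k hk0 hkl hxk hrho s hsv hxs hdistR
    refine ⟨spliceV P iL j s eL eR (by omega) hj2 hevL hevR hsv (fun m hm _ => hq m hm),
      ?_, Or.inr ⟨?_, ?_⟩⟩
    · exact act_spliceV P hAct iL j s eL eR (by omega) hj2 hevL hevR hsv
        (fun m hm _ => hq m hm) ⟨he2L, he1R⟩ hancs SAi SAj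
    · rw [spliceV_len]; omega
    · intro m hm
      rw [spliceV_len] at hm
      rw [spliceV_vert]
      have hxonly : ∀ m' ≤ P.len, m' ≠ k → P.vert m' ≠ x := fun m' hm' hmk heq =>
        hmk (P.inj m' k hm' hkl.le (heq.trans hxk.symm))
      by_cases h1 : m ≤ iL
      · rw [if_pos h1]
        exact hxonly m (by omega) (by omega)
      · rw [if_neg h1]
        by_cases h2 : m = iL + 1
        · rw [if_pos h2]; exact hsx
        · rw [if_neg h2]
          exact hxonly _ (by omega) (by omega)

lemma descend (hG : G.IsMAG) {x : V} (hC : Cond G x) {y z u v : V} {Z : Set V}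
    (hyx : y ≠ x) (hzx : z ≠ x) (hZx : x ∉ Z)
    (P : MPath G u v) (hAct : Act G y z Z P) (k : ℕ) (hk0 : 0 < k) (hkl : k < P.len)
    (hxk : P.vert k = x) :
    (∃ P' : MPath G u v, Act G y z Z P' ∧
      (P'.len < P.len ∨ (P'.len ≤ P.len ∧ ∀ m ≤ P'.len, P'.vert m ≠ x))) ∨
    (∃ P' : MPath G v u, Act G y z Z P' ∧
      (P'.len < P.len ∨ (P'.len ≤ P.len ∧ ∀ m ≤ P'.len, P'.vert m ≠ x))) := by
  have hxkR : (revPath P).vert (P.len - k) = x := by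
    rw [revPath_vert, Nat.sub_sub_self hkl.le]
    exact hxk
  by_cases hrho : headAt1 (P.edir k) <;> by_cases hlam : headAt2 (P.edir (k - 1))
  · exact Or.inl (caseCollider hG hC hyx hzx hZx P hAct k hk0 hkl hxk hlam hrho)
  · -- arrowhead right, tail left: work on the reversed path
    right
    have heL : P.edir (k - 1) = .bwd := by
      cases h : P.edir (k - 1) with
      | fwd => exact absurd (h ▸ Or.inl rfl) hlam
      | bwd => rfl
      | bidir => exact absurd (h ▸ Or.inr rfl) hlam
    have heRR : (revPath P).edir (P.len - k) = .fwd := by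
      rw [revPath_edir, show P.len - (P.len - k) - 1 = k - 1 by omega, heL]
      rfl
    have hstartR : headAt2 ((revPath P).edir (P.len - k - 1)) := by
      rw [revPath_edir, show P.len - (P.len - k - 1) - 1 = k by omega, headAt2_flip]
      exact hrho
    obtain ⟨P', hA', hlen'⟩ := caseRhoTail hG hC (revPath P) (act_revPath hAct) (P.len - k)
      (by omega) (by simp; omega) hxkR heRR (Or.inl hstartR)
    exact ⟨P', hA', Or.inl (by simpa using hlen')⟩
  · -- arrowhead left, tail right
    left
    have heR : P.edir k = .fwd := by
      cases h : P.edir k with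
      | fwd => rfl
      | bwd => exact absurd (h ▸ Or.inl rfl) hrho
      | bidir => exact absurd (h ▸ Or.inr rfl) hrho
    obtain ⟨P', hA', hlen'⟩ := caseRhoTail hG hC P hAct k hk0 hkl hxk heR (Or.inl hlam)
    exact ⟨P', hA', Or.inl hlen'⟩
  · -- tails on both sides: x → a and x → b
    have heL : P.edir (k - 1) = .bwd := by
      cases h : P.edir (k - 1) with
      | fwd => exact absurd (h ▸ Or.inl rfl) hlam
      | bwd => rfl
      | bidir => exact absurd (h ▸ Or.inr rfl) hlam
    have heR : P.edir k = .fwd := by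
      cases h : P.edir k with
      | fwd => rfl
      | bwd => exact absurd (h ▸ Or.inl rfl) hrho
      | bidir => exact absurd (h ▸ Or.inr rfl) hrho
    have hva0 := P.valid (k - 1) (by omega)
    rw [heL, show k - 1 + 1 = k by omega, hxk] at hva0
    have hva : G.dir x (P.vert (k - 1)) := hva0
    have hvb0 := P.valid k hkl
    rw [heR, hxk] at hvb0
    have hvb : G.dir x (P.vert (k + 1)) := hvb0
    have hanb : P.vert (k - 1) ≠ P.vert (k + 1) := fun heq => by
      have := P.inj (k - 1) (k + 1) (by omega) (by omega) heq
      omega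
    have hadjab : G.adj (P.vert (k - 1)) (P.vert (k + 1)) :=
      C0 hG hC (Or.inl hva) (dir_ne hG hva).symm hvb (P.mem (k + 1) (by omega)) hanb
    rcases hadjab with hab | hba | hbiab
    · obtain ⟨P', hA', hlen'⟩ := caseRhoTail hG hC P hAct k hk0 hkl hxk heR (Or.inr hab)
      exact Or.inl ⟨P', hA', Or.inl hlen'⟩
    · right
      have heRR : (revPath P).edir (P.len - k) = .fwd := by
        rw [revPath_edir, show P.len - (P.len - k) - 1 = k - 1 by omega, heL]
        rfl
      have hbaR : G.dir ((revPath P).vert (P.len - k - 1)) ((revPath P).vert (P.len - k + 1)) := by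
        rw [revPath_vert, revPath_vert, show P.len - (P.len - k - 1) = k + 1 by omega,
          show P.len - (P.len - k + 1) = k - 1 by omega]
        exact hba
      obtain ⟨P', hA', hlen'⟩ := caseRhoTail hG hC (revPath P) (act_revPath hAct) (P.len - k)
        (by omega) (by simp; omega) hxkR heRR (Or.inr hbaR)
      exact ⟨P', hA', Or.inl (by simpa using hlen')⟩
    · left
      refine ⟨spliceE P (k - 1) (k + 1) .bidir (by omega) (by omega) hbiab, ?_, Or.inl ?_⟩
      · refine act_spliceE P hAct (k - 1) (k + 1) .bidir (by omega) (by omega) hbiab ?_ ?_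
        · intro h0
          have hcoliff : P.collider (k - 1) ↔
              (headAt2 (P.edir (k - 1 - 1)) ∧ headAt1 EdgeDir.bidir) := by
            unfold MPath.collider
            rw [heL]
            constructor
            · rintro ⟨ha, -⟩; exact ⟨ha, Or.inr rfl⟩
            · rintro ⟨ha, -⟩; exact ⟨ha, Or.inl rfl⟩
          constructor
          · intro hcc
            exact (hAct (k - 1) h0 (by omega)).1 (hcoliff.mpr hcc)
          · intro hn
            exact (hAct (k - 1) h0 (by omega)).2 (fun hcc => hn (hcoliff.mp hcc))
        · intro hlt
          have hcoliff : P.collider (k + 1) ↔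
              (headAt2 EdgeDir.bidir ∧ headAt1 (P.edir (k + 1))) := by
            unfold MPath.collider
            rw [show k + 1 - 1 = k by omega, heR]
            constructor
            · rintro ⟨-, ha⟩; exact ⟨Or.inr rfl, ha⟩
            · rintro ⟨-, ha⟩; exact ⟨Or.inl rfl, ha⟩
          constructor
          · intro hcc
            exact (hAct (k + 1) (by omega) hlt).1 (hcoliff.mpr hcc)
          · intro hn
            exact (hAct (k + 1) (by omega) hlt).2 (fun hcc => hn (hcoliff.mp hcc))
      · change k - 1 + 1 + (P.len - (k + 1)) < P.len; omega

end RemAux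
namespace RemAux
open MixedGraph

variable {V : Type*} {G : MixedGraph V}

lemma mSep_symm {G' : MixedGraph V} {a b : V} {Z : Set V} (h : mSep G' a b Z) :
    mSep G' b a Z := by
  intro P
  by_contra hnb
  have hA : Act G' b a Z P := act_of_not_blocked P (Or.inl ⟨rfl, rfl⟩) hnb
  have hA2 : Act G' b a Z (revPath P) := act_revPath hA
  exact not_blocked_of_act (revPath P) (Or.inr ⟨rfl, rfl⟩) hA2 (h (revPath P))

open scoped Classical in
lemma no_active (hG : G.IsMAG) {x : V} (hC : Cond G x) {y z : V} {Z : Set V}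
    (hyx : y ≠ x) (hzx : z ≠ x) (hZx : x ∉ Z)
    (hHy : mSep (G.induce (G.verts \ {x})) y z Z) :
    ∀ (n : ℕ) (u v' : V), ((u = y ∧ v' = z) ∨ (u = z ∧ v' = y)) → ∀ P : MPath G u v',
      Act G y z Z P → 2 * P.len + (if ∀ m ≤ P.len, P.vert m ≠ x then 0 else 1) ≤ n →
      False := by
  have hHz : mSep (G.induce (G.verts \ {x})) z y Z := mSep_symm hHy
  intro n
  induction n using Nat.strong_induction_on with
  | _ n ih =>
    intro u v' huv P hAct hm
    by_cases hxP : ∀ m ≤ P.len, P.vert m ≠ x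
    · have hmemH : ∀ m ≤ P.len, P.vert m ∈ G.verts \ {x} := fun m hm' =>
        ⟨P.mem m hm', hxP m hm'⟩
      have hbl : (toInduce (G.verts \ {x}) P hmemH).blocked Z := by
        rcases huv with ⟨rfl, rfl⟩ | ⟨rfl, rfl⟩
        · exact hHy _
        · exact hHz _
      obtain ⟨m, hm0, hml, hcase⟩ := hbl
      have hml' : m < P.len := hml
      rcases hcase with ⟨hc, hno⟩ | ⟨hnc, hmemZ⟩
      · obtain ⟨w, hw, hanc⟩ := (hAct m hm0 hml').1 hc
        have hwx : w ≠ x := by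
          rcases hw with h | h | h
          · exact fun he => hZx (he ▸ h)
          · exact h ▸ hyx
          · exact h ▸ hzx
        have hancH := anc_avoid hG x (shortcut hG hC) (hxP m hml'.le) hwx hanc
        exact hno w ((mem_pair_iff huv w).mpr hw) hancH
      · exact (hAct m hm0 hml').2 hnc hmemZ
    · have hcnot := hxP
      push_neg at hxP
      obtain ⟨k, hkle, hxk⟩ := hxP
      have hux : u ≠ x := by rcases huv with ⟨rfl, -⟩ | ⟨rfl, -⟩ <;> assumption
      have hvx : v' ≠ x := by rcases huv with ⟨-, rfl⟩ | ⟨-, rfl⟩ <;> assumption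
      have hk0 : 0 < k := by
        by_contra h
        have hk : k = 0 := by omega
        rw [hk, P.first] at hxk
        exact hux hxk
      have hkl : k < P.len := by
        rcases eq_or_lt_of_le hkle with h | h
        · rw [h, P.last] at hxk; exact absurd hxk hvx
        · exact h
      rw [if_neg hcnot] at hm
      obtain hres := descend hG hC hyx hzx hZx P hAct k hk0 hkl hxk
      rcases hres with ⟨P', hA', hdec⟩ | ⟨P', hA', hdec⟩
      · refine ih (2 * P'.len + (if ∀ m ≤ P'.len, P'.vert m ≠ x then 0 else 1)) ?_
          u v' huv P' hA' le_rfl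
        rcases hdec with h | ⟨h1, h2⟩
        · have : (if ∀ m ≤ P'.len, P'.vert m ≠ x then 0 else 1) ≤ 1 := by
            split <;> omega
          omega
        · rw [if_pos h2]; omega
      · have huv' : (v' = y ∧ u = z) ∨ (v' = z ∧ u = y) := by
          rcases huv with ⟨rfl, rfl⟩ | ⟨rfl, rfl⟩
          · exact Or.inr ⟨rfl, rfl⟩
          · exact Or.inl ⟨rfl, rfl⟩
        refine ih (2 * P'.len + (if ∀ m ≤ P'.len, P'.vert m ≠ x then 0 else 1)) ?_
          v' u huv' P' hA' le_rfl
        rcases hdec with h | ⟨h1, h2⟩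
        · have : (if ∀ m ≤ P'.len, P'.vert m ≠ x then 0 else 1) ≤ 1 := by
            split <;> omega
          omega
        · rw [if_pos h2]; omega

lemma cond_imp_mSep (hG : G.IsMAG) {x : V} (hC : Cond G x) {y z : V} {Z : Set V}
    (hyx : y ≠ x) (hzx : z ≠ x) (hZx : x ∉ Z)
    (hH : mSep (G.induce (G.verts \ {x})) y z Z) : mSep G y z Z := by
  classical
  intro P
  by_contra hnb
  exact no_active hG hC hyx hzx hZx hH
    (2 * P.len + (if ∀ m ≤ P.len, P.vert m ≠ x then 0 else 1)) y z (Or.inl ⟨rfl, rfl⟩) P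
    (act_of_not_blocked P (Or.inl ⟨rfl, rfl⟩) hnb) le_rfl

lemma mSep_to_induce {x : V} {a b : V} {S : Set V} (h : mSep G a b S) :
    mSep (G.induce (G.verts \ {x})) a b (S \ {x}) := by
  intro P
  obtain ⟨m, hm0, hml, hcase⟩ := h (ofInduce P)
  refine ⟨m, hm0, hml, ?_⟩
  rcases hcase with ⟨hc, hno⟩ | ⟨hnc, hmem⟩
  · left
    refine ⟨hc, ?_⟩
    intro w hw hanc
    refine hno w ?_ (anc_induce_mono hanc)
    rcases hw with hw | hw
    · exact Set.mem_union_left _ hw.1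
    · exact Set.mem_union_right _ hw
  · right
    exact ⟨hnc, hmem, (P.mem m hml.le).2.2⟩

lemma removable_imp_cond (hG : G.IsMAG) {x : V} (hrem : G.Removable x) :
    Cond G x := by
  intro y p hp z hz hvz hpar
  by_contra hadj
  have hyv : y ∈ G.verts := p.last ▸ p.mem p.len le_rfl
  have hxy : x ≠ y := fun h => by
    have h0 : (0 : ℕ) = p.len := p.inj 0 p.len (by omega) le_rfl
      (by rw [p.first, p.last, h])
    have := p.len_pos
    omega
  have hzy : y ≠ z := by
    have := hvz p.len le_rfl
    rwa [p.last] at this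
  have hzx : z ≠ x := by
    have := hvz 0 (by omega)
    rw [p.first] at this
    exact fun h => this h.symm
  have hdxz : G.dir x z := by
    have := hpar 0 p.len_pos
    rwa [p.first] at this
  obtain ⟨S, hS, hsep⟩ := hG.maximal y hyv z hz hzy hadj
  have hsepH := mSep_to_induce (x := x) hsep
  have hSsub : S \ {x} ⊆ G.verts \ {x, y, z} := by
    intro w hw
    have h1 := hS hw.1
    refine ⟨h1.1, ?_⟩
    intro hmem
    rcases hmem with h | h
    · exact hw.2 h
    · exact h1.2 h
  have hsepG := (hrem y z hyv hz hxy.symm hzx hzy (S \ {x}) hSsub).mpr hsepH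
  have hneQ : ∀ m ≤ (revPath p).len, (revPath p).vert m ≠ z := by
    intro m hm
    rw [revPath_vert]
    exact hvz (p.len - m) (by omega)
  have hQval : edirValid G x z .fwd := hdxz
  obtain ⟨m, hm0, hml, hcase⟩ := hsepG (appendEdge (revPath p) .fwd hQval hz hneQ)
  rw [appendEdge_len, revPath_len] at hml
  rcases Nat.lt_or_ge m p.len with hmlt | hmge
  · have hedm : (appendEdge (revPath p) .fwd hQval hz hneQ).edir m
        = flip (p.edir (p.len - m - 1)) := by
      rw [appendEdge_edir, if_pos (show m < (revPath p).len by rw [revPath_len]; exact hmlt),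
        revPath_edir]
    have hedm1 : (appendEdge (revPath p) .fwd hQval hz hneQ).edir (m - 1)
        = flip (p.edir (p.len - m)) := by
      rw [appendEdge_edir, if_pos (show m - 1 < (revPath p).len by rw [revPath_len]; omega),
        revPath_edir, show p.len - (m - 1) - 1 = p.len - m by omega]
    have hQvm : (appendEdge (revPath p) .fwd hQval hz hneQ).vert m = p.vert (p.len - m) := by
      rw [appendEdge_vert, if_pos (show m ≤ (revPath p).len by rw [revPath_len]; omega),
        revPath_vert]
    have hcol : (appendEdge (revPath p) .fwd hQval hz hneQ).collider m := by
      unfold MPath.collider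
      rw [hedm, hedm1]
      have hpcol := hp (p.len - m) (by omega) (by omega)
      exact ⟨(headAt2_flip _).mpr hpcol.2, (headAt1_flip _).mpr hpcol.1⟩
    rcases hcase with ⟨-, hno⟩ | ⟨hnc, -⟩
    · refine hno z (Set.mem_union_right _ (by simp)) ?_
      rw [hQvm]
      exact Relation.ReflTransGen.single (hpar (p.len - m) (by omega))
    · exact hnc hcol
  · have hm' : m = p.len := by omega
    subst hm'
    have hedm : (appendEdge (revPath p) .fwd hQval hz hneQ).edir p.len = .fwd := by
      rw [appendEdge_edir, if_neg (show ¬ p.len < (revPath p).len by rw [revPath_len]; omega)]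
    rcases hcase with ⟨hcc, -⟩ | ⟨-, hmem⟩
    · have := hcc.2
      rw [hedm] at this
      rcases this with h | h <;> exact EdgeDir.noConfusion h
    · have hQx : (appendEdge (revPath p) .fwd hQval hz hneQ).vert p.len = x := by
        rw [appendEdge_vert, if_pos (show p.len ≤ (revPath p).len by rw [revPath_len]),
          revPath_vert, Nat.sub_self, p.first]
      rw [hQx] at hmem
      exact hmem.2 rfl

end RemAux
/-- In a MAG `G`, `X` is removable iff for every collider path
`(X, V₁, …, Vₘ, Y)` and every vertex `Z ∉ {X, Y, V₁, …, Vₘ}` with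
`{X, V₁, …, Vₘ} ⊆ Pa(Z)`, the vertices `Y` and `Z` are neighbors. -/
theorem stmt_2 {V : Type*} [Fintype V] (G : MixedGraph V) (hG : G.IsMAG)
    (x : V) (hx : x ∈ G.verts) :
    G.Removable x ↔
      ∀ (y : V) (p : MPath G x y), p.isColliderPath →
        ∀ z ∈ G.verts, (∀ i, i ≤ p.len → p.vert i ≠ z) →
          (∀ i, i < p.len → G.dir (p.vert i) z) → G.adj y z := by
  constructor
  · intro hrem
    exact RemAux.removable_imp_cond hG hrem
  · intro hC
    intro y' z' hy hz hyx hzx hyz Z hZ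
    have hxZ : x ∉ Z := fun h => (hZ h).2 (Set.mem_insert _ _)
    constructor
    · intro hsep
      have h2 := RemAux.mSep_to_induce (x := x) hsep
      rwa [Set.diff_singleton_eq_self hxZ] at h2
    · intro hsepH
      exact RemAux.cond_imp_mSep hG hC hyx hzx hxZ hsepH
end

section
/- In any MAG, every vertex with no children is removable, and the set of vertices with no children is non-empty; consequently, any MAG has at least one removable vertex. -/
section Aux

variable {V : Type*} {G : MixedGraph V}

/-- If `x` has no children, any ancestor relation from `x` is trivial. -/
lemma no_children_anc {x w : V} (hx : ∀ y, ¬ G.dir x y) (h : G.anc x w) : w = x := by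
  rcases Relation.ReflTransGen.cases_head h with h | ⟨c, hc, _⟩
  · exact h.symm
  · exact absurd hc (hx c)

/-- Ancestry transfers to the induced subgraph removing a childless vertex. -/
lemma anc_induce_of_anc {x w : V} (hx : ∀ y, ¬ G.dir x y) (hw : w ≠ x) :
    ∀ {a : V}, G.anc a w → a ≠ x → (G.induce (G.verts \ {x})).anc a w := by
  intro a h
  induction h using Relation.ReflTransGen.head_induction_on with
  | refl => exact fun _ => Relation.ReflTransGen.refl
  | @head a b hab hbw ih =>
    intro ha
    have hb : b ≠ x := by
      rintro rfl
      exact hw (no_children_anc hx hbw)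
    exact Relation.ReflTransGen.head
      ⟨hab, ⟨(G.dir_mem hab).1, ha⟩, ⟨(G.dir_mem hab).2, hb⟩⟩ (ih hb)

lemma anc_of_anc_induce {W : Set V} {a w : V} (h : (G.induce W).anc a w) : G.anc a w :=
  Relation.ReflTransGen.mono (r := (G.induce W).dir) (p := G.dir) (fun _ _ h => h.1) _ _ h

lemma edirValid_of_induce {W : Set V} {a b : V} {e : EdgeDir}
    (h : edirValid (G.induce W) a b e) : edirValid G a b e := by
  cases e <;> exact h.1

lemma edirValid_induce {W : Set V} {a b : V} {e : EdgeDir}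
    (h : edirValid G a b e) (ha : a ∈ W) (hb : b ∈ W) :
    edirValid (G.induce W) a b e := by
  cases e with
  | fwd => exact ⟨h, ha, hb⟩
  | bwd => exact ⟨h, hb, ha⟩
  | bidir => exact ⟨h, ha, hb⟩

/-- Lift a path in an induced subgraph to a path in `G`. -/
def MPath.lift {W : Set V} {y z : V} (p : MPath (G.induce W) y z) : MPath G y z where
  len := p.len
  len_pos := p.len_pos
  vert := p.vert
  edir := p.edir
  first := p.first
  last := p.last
  mem := fun i hi => (p.mem i hi).1
  inj := p.inj
  valid := fun i hi => edirValid_of_induce (p.valid i hi)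

/-- Restrict a path in `G` avoiding `x` to the induced subgraph. -/
def MPath.restrict {x y z : V} (p : MPath G y z)
    (hx : ∀ i, i ≤ p.len → p.vert i ≠ x) : MPath (G.induce (G.verts \ {x})) y z where
  len := p.len
  len_pos := p.len_pos
  vert := p.vert
  edir := p.edir
  first := p.first
  last := p.last
  mem := fun i hi => ⟨p.mem i hi, p.mem i hi, hx i hi⟩
  inj := p.inj
  valid := fun i hi => edirValid_induce (p.valid i hi)
    ⟨p.mem i (le_of_lt hi), hx i (le_of_lt hi)⟩
    ⟨p.mem (i + 1) hi, hx (i + 1) hi⟩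

end Aux

/-- In any MAG (with finite non-empty vertex set), every vertex with
no children is removable, the set of vertices with no children is non-empty, and hence
there is at least one removable vertex. -/
theorem stmt_3 {V : Type*} [Fintype V] (G : MixedGraph V) (hG : G.IsMAG)
    (hne : G.verts.Nonempty) :
    (∀ x ∈ G.verts, (∀ y, ¬ G.dir x y) → G.Removable x) ∧
    (∃ x ∈ G.verts, ∀ y, ¬ G.dir x y) ∧
    (∃ x ∈ G.verts, G.Removable x) := by
  classical
  -- Part 1: every childless vertex is removable.
  have part1 : ∀ x ∈ G.verts, (∀ y, ¬ G.dir x y) → G.Removable x := by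
    intro x _hxv hx
    intro y z hy hz hyx hzx hyz Z hZ
    have hwne : ∀ w ∈ Z ∪ ({y, z} : Set V), w ≠ x := by
      intro w hw
      rcases hw with hw | hw
      · have := hZ hw
        simp only [Set.mem_diff, Set.mem_insert_iff, Set.mem_singleton_iff] at this
        exact fun h => this.2 (Or.inl h)
      · rcases hw with rfl | hw
        · exact hyx
        · simp only [Set.mem_singleton_iff] at hw; subst hw; exact hzx
    constructor
    · -- mSep G → mSep induced
      intro h p
      obtain ⟨i, hi0, hil, hcase⟩ := h p.lift
      refine ⟨i, hi0, hil, ?_⟩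
      rcases hcase with ⟨hc, hanc⟩ | ⟨hc, hmem⟩
      · exact Or.inl ⟨hc, fun w hw hanc' => hanc w hw (anc_of_anc_induce hanc')⟩
      · exact Or.inr ⟨hc, hmem⟩
    · -- mSep induced → mSep G
      intro h p
      by_cases hxin : ∃ i, i ≤ p.len ∧ p.vert i = x
      · -- x is an interior vertex of p; it blocks p as a collider.
        obtain ⟨i, hile, hvi⟩ := hxin
        have hi0 : 0 < i := by
          rcases Nat.eq_zero_or_pos i with rfl | h
          · exact absurd (p.first.symm.trans hvi) hyx
          · exact h
        have hil : i < p.len := by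
          rcases lt_or_eq_of_le hile with h | rfl
          · exact h
          · exact absurd (p.last.symm.trans hvi) hzx
        refine ⟨i, hi0, hil, Or.inl ⟨?_, ?_⟩⟩
        · -- x is a collider at position i
          constructor
          · have hv := p.valid (i - 1) (by omega)
            have hieq : i - 1 + 1 = i := by omega
            rw [hieq] at hv
            cases he : p.edir (i - 1) with
            | fwd => exact Or.inl rfl
            | bidir => exact Or.inr rfl
            | bwd =>
              rw [he] at hv
              exact absurd (hvi ▸ hv) (hx _)
          · have hv := p.valid i hil
            cases he : p.edir i with
            | bwd => exact Or.inl rfl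
            | bidir => exact Or.inr rfl
            | fwd =>
              rw [he] at hv
              exact absurd (hvi ▸ hv) (hx _)
        · intro w hw hanc
          rw [hvi] at hanc
          exact hwne w hw (no_children_anc hx hanc)
      · -- p avoids x: restrict and use m-separation in the induced graph.
        push_neg at hxin
        obtain ⟨i, hi0, hil, hcase⟩ := h (p.restrict hxin)
        refine ⟨i, hi0, hil, ?_⟩
        rcases hcase with ⟨hc, hanc⟩ | ⟨hc, hmem⟩
        · refine Or.inl ⟨hc, fun w hw hanc' => hanc w hw ?_⟩
          exact anc_induce_of_anc hx (hwne w hw) hanc' (hxin i (le_of_lt hil))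
        · exact Or.inr ⟨hc, hmem⟩
  -- Part 2: there is a childless vertex.
  have part2 : ∃ x ∈ G.verts, ∀ y, ¬ G.dir x y := by
    have hirr : ∀ a, ¬ Relation.TransGen G.dir a a := by
      intro a ha
      obtain ⟨b, hab, hba⟩ := (Relation.TransGen.head'_iff).1 ha
      exact hG.no_dir_cycle a b hab hba
    have : IsTrans V (fun a b => Relation.TransGen G.dir b a) :=
      ⟨fun _ _ _ h1 h2 => h2.trans h1⟩
    have : IsIrrefl V (fun a b => Relation.TransGen G.dir b a) := ⟨hirr⟩
    have hwf : WellFounded (fun a b => Relation.TransGen G.dir b a) :=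
      Finite.wellFounded_of_trans_of_irrefl _
    obtain ⟨x, hxv, hmin⟩ := hwf.has_min G.verts hne
    refine ⟨x, hxv, fun y hxy => ?_⟩
    exact hmin y (G.dir_mem hxy).2 (Relation.TransGen.single hxy)
  obtain ⟨x, hxv, hx⟩ := part2
  exact ⟨part1, ⟨x, hxv, hx⟩, ⟨x, hxv, part1 x hxv hx⟩⟩
end

section
/- In a MAG G, if a vertex X is removable, then |Mb(X;G)| ≤ Δin+(G). Furthermore, if G is a DAG and X is removable, then |Mb(X;G)| ≤ Δin(G), where Δin(G) is the maximum in-degree of G. -/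
/-! ### Auxiliary development for Statement 4 -/

section Aux4

variable {V : Type*}

open MixedGraph

namespace Stmt4

lemma not_headAt1_iff {e : EdgeDir} : ¬ headAt1 e ↔ e = .fwd := by
  cases e <;> simp [headAt1]

lemma not_headAt2_iff {e : EdgeDir} : ¬ headAt2 e ↔ e = .bwd := by
  cases e <;> simp [headAt2]

lemma anc_antisymm {G : MixedGraph V} (hG : G.IsMAG) {a b : V}
    (h1 : G.anc a b) (h2 : G.anc b a) : a = b := by
  by_contra hne
  rcases h1.cases_head with h | ⟨c, hac, hcb⟩
  · exact hne h
  · exact hG.no_dir_cycle a c hac (hcb.trans h2)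

lemma anc_of_dir {G : MixedGraph V} {a b : V} (h : G.dir a b) : G.anc a b :=
  Relation.ReflTransGen.single h

lemma dir_ne {G : MixedGraph V} (hG : G.IsMAG) {a b : V} (h : G.dir a b) : a ≠ b := by
  rintro rfl
  exact hG.no_dir_cycle a a h Relation.ReflTransGen.refl

/-- Transport a path along a graph inclusion. -/
def transport {G K : MixedGraph V} (hv : K.verts ⊆ G.verts)
    (hd : ∀ a b, K.dir a b → G.dir a b) (hb : ∀ a b, K.bi a b → G.bi a b)
    {x y : V} (p : MPath K x y) : MPath G x y where
  len := p.len
  len_pos := p.len_pos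
  vert := p.vert
  edir := p.edir
  first := p.first
  last := p.last
  mem i hi := hv (p.mem i hi)
  inj := p.inj
  valid i hi := by
    have h := p.valid i hi
    cases he : p.edir i <;> rw [he] at h <;>
      [exact hd _ _ h; exact hd _ _ h; exact hb _ _ h]

@[simp] lemma transport_len {G K : MixedGraph V} (hv : K.verts ⊆ G.verts)
    (hd : ∀ a b, K.dir a b → G.dir a b) (hb : ∀ a b, K.bi a b → G.bi a b)
    {x y : V} (p : MPath K x y) : (transport hv hd hb p).len = p.len := rfl

@[simp] lemma transport_vert {G K : MixedGraph V} (hv : K.verts ⊆ G.verts)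
    (hd : ∀ a b, K.dir a b → G.dir a b) (hb : ∀ a b, K.bi a b → G.bi a b)
    {x y : V} (p : MPath K x y) : (transport hv hd hb p).vert = p.vert := rfl

@[simp] lemma transport_edir {G K : MixedGraph V} (hv : K.verts ⊆ G.verts)
    (hd : ∀ a b, K.dir a b → G.dir a b) (hb : ∀ a b, K.bi a b → G.bi a b)
    {x y : V} (p : MPath K x y) : (transport hv hd hb p).edir = p.edir := rfl

/-- The suffix of a path starting at position `j`. -/
def suffix {G : MixedGraph V} {x y : V} (p : MPath G x y) (j : ℕ) (hj : j < p.len) :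
    MPath G (p.vert j) y where
  len := p.len - j
  len_pos := by omega
  vert i := p.vert (j + i)
  edir i := p.edir (j + i)
  first := by simp
  last := by
    show p.vert (j + (p.len - j)) = y
    have h : j + (p.len - j) = p.len := by omega
    rw [h, p.last]
  mem i hi := p.mem _ (by omega)
  inj i k hi hk h := by
    have := p.inj (j + i) (j + k) (by omega) (by omega) h
    omega
  valid i hi := by
    show edirValid G (p.vert (j + i)) (p.vert (j + (i + 1))) (p.edir (j + i))
    have h := p.valid (j + i) (by omega)
    have h2 : j + (i + 1) = j + i + 1 := by omega
    rw [h2]; exact h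

@[simp] lemma suffix_len {G : MixedGraph V} {x y : V} (p : MPath G x y) (j : ℕ)
    (hj : j < p.len) : (suffix p j hj).len = p.len - j := rfl

@[simp] lemma suffix_vert {G : MixedGraph V} {x y : V} (p : MPath G x y) (j : ℕ)
    (hj : j < p.len) (i : ℕ) : (suffix p j hj).vert i = p.vert (j + i) := rfl

@[simp] lemma suffix_edir {G : MixedGraph V} {x y : V} (p : MPath G x y) (j : ℕ)
    (hj : j < p.len) (i : ℕ) : (suffix p j hj).edir i = p.edir (j + i) := rfl

lemma suffix_collider {G : MixedGraph V} {x y : V} (p : MPath G x y) (j : ℕ)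
    (hj : j < p.len) (i : ℕ) (hi : 0 < i) :
    (suffix p j hj).collider i ↔ p.collider (j + i) := by
  unfold MPath.collider
  have h : j + i - 1 = j + (i - 1) := by omega
  rw [suffix_edir, suffix_edir, h]

lemma suffix_isColliderPath {G : MixedGraph V} {x y : V} (p : MPath G x y) (j : ℕ)
    (hj : j < p.len) (hcp : p.isColliderPath) : (suffix p j hj).isColliderPath := by
  intro i hi0 hilen
  rw [suffix_collider p j hj i hi0]
  exact hcp (j + i) (by omega) (by simp at hilen; omega)

/-- Append a directed edge `x → z` at the end of a path ending at `x`. -/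
def snoc {G : MixedGraph V} {w x z : V} (p : MPath G w x) (hd : G.dir x z)
    (hz : ∀ i, i ≤ p.len → p.vert i ≠ z) : MPath G w z where
  len := p.len + 1
  len_pos := by omega
  vert i := if i ≤ p.len then p.vert i else z
  edir i := if i < p.len then p.edir i else .fwd
  first := by simp [p.first]
  last := by simp
  mem i hi := by
    by_cases h : i ≤ p.len
    · simpa [h] using p.mem i h
    · simpa [h] using (G.dir_mem hd).2
  inj i k hi hk h := by
    by_cases h1 : i ≤ p.len <;> by_cases h2 : k ≤ p.len <;> simp [h1, h2] at h
    · exact p.inj i k h1 h2 h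
    · exact absurd h (hz i h1)
    · exact absurd h.symm (hz k h2)
    · omega
  valid i hi := by
    by_cases h1 : i < p.len
    · have ha : i ≤ p.len := le_of_lt h1
      have hb : i + 1 ≤ p.len := h1
      simp only [ha, hb, h1, if_pos]
      exact p.valid i h1
    · have hi' : i = p.len := by omega
      subst hi'
      have hb : ¬ (p.len + 1 ≤ p.len) := by omega
      simp only [le_refl, if_pos, hb, if_neg, h1]
      rw [p.last]
      exact hd

@[simp] lemma snoc_len {G : MixedGraph V} {w x z : V} (p : MPath G w x) (hd : G.dir x z)
    (hz : ∀ i, i ≤ p.len → p.vert i ≠ z) : (snoc p hd hz).len = p.len + 1 := rfl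

lemma snoc_vert_of_le {G : MixedGraph V} {w x z : V} (p : MPath G w x) (hd : G.dir x z)
    (hz : ∀ i, i ≤ p.len → p.vert i ≠ z) {i : ℕ} (hi : i ≤ p.len) :
    (snoc p hd hz).vert i = p.vert i := by simp [snoc, hi]

lemma snoc_collider_of_lt {G : MixedGraph V} {w x z : V} (p : MPath G w x) (hd : G.dir x z)
    (hz : ∀ i, i ≤ p.len → p.vert i ≠ z) {i : ℕ} (hi0 : 0 < i) (hi : i < p.len) :
    ((snoc p hd hz).collider i ↔ p.collider i) := by
  unfold MPath.collider
  have h1 : i - 1 < p.len := by omega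
  simp [snoc, h1, hi]

lemma snoc_not_collider_last {G : MixedGraph V} {w x z : V} (p : MPath G w x) (hd : G.dir x z)
    (hz : ∀ i, i ≤ p.len → p.vert i ≠ z) : ¬ (snoc p hd hz).collider p.len := by
  unfold MPath.collider
  have h : ¬ (p.len < p.len) := by omega
  simp [snoc, h, headAt1]


/-- Key separation lemma: if `w, z` are non-adjacent in the MAG `G`, then in any
subgraph `K` of `G`, `w` and `z` are m-separated by the ancestor-based set. -/
lemma sep_lemma {G K : MixedGraph V} (hG : G.IsMAG)
    (hv : K.verts ⊆ G.verts) (hd : ∀ a b, K.dir a b → G.dir a b)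
    (hb : ∀ a b, K.bi a b → G.bi a b)
    {w z : V} (hwv : w ∈ G.verts) (hzv : z ∈ G.verts) (hwz : w ≠ z)
    (hnadj : ¬ G.adj w z) :
    mSep K w z {v | v ≠ w ∧ v ≠ z ∧ (K.anc v w ∨ K.anc v z)} := by
  intro p
  by_contra hbl
  set S : Set V := {v | v ≠ w ∧ v ≠ z ∧ (K.anc v w ∨ K.anc v z)} with hS
  unfold MPath.blocked at hbl
  push_neg at hbl
  have hvne : ∀ i, 0 < i → i < p.len → p.vert i ≠ w ∧ p.vert i ≠ z := by
    intro i hi0 hil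
    constructor
    · intro h
      have h0 : i = 0 := p.inj i 0 (by omega) (by omega) (by rw [h, p.first])
      omega
    · intro h
      have h0 : i = p.len := p.inj i p.len (by omega) (le_refl _) (by rw [h, p.last])
      omega
  have hact : ∀ i, 0 < i → i < p.len → p.collider i →
      (K.anc (p.vert i) w ∨ K.anc (p.vert i) z) := by
    intro i hi0 hil hc
    obtain ⟨u, hu, hanc⟩ := (hbl i hi0 hil).1 hc
    rcases hu with hu | hu
    · rcases hu.2.2 with h | h
      · exact Or.inl (hanc.trans h)
      · exact Or.inr (hanc.trans h)
    · simp only [Set.mem_insert_iff, Set.mem_singleton_iff] at hu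
      rcases hu with rfl | rfl
      · exact Or.inl hanc
      · exact Or.inr hanc
  have right_walk : ∀ m j, p.len - j = m + 1 → p.edir j = EdgeDir.fwd →
      ∀ u, K.anc u (p.vert j) → (K.anc u w ∨ K.anc u z) := by
    intro m
    induction m with
    | zero =>
      intro j hj he u hu
      have hjl : j < p.len := by omega
      have hd1 : K.dir (p.vert j) (p.vert (j + 1)) := by
        have h := p.valid j hjl; rw [he] at h; exact h
      have hju : j + 1 = p.len := by omega
      have h2 : K.anc u (p.vert p.len) := by
        rw [← hju]; exact hu.trans (anc_of_dir hd1)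
      rw [p.last] at h2
      exact Or.inr h2
    | succ m ih =>
      intro j hj he u hu
      have hjl : j < p.len := by omega
      have hd1 : K.dir (p.vert j) (p.vert (j + 1)) := by
        have h := p.valid j hjl; rw [he] at h; exact h
      have hu1 : K.anc u (p.vert (j + 1)) := hu.trans (anc_of_dir hd1)
      have hj1 : j + 1 < p.len := by omega
      by_cases hc : p.collider (j + 1)
      · rcases hact (j + 1) (by omega) hj1 hc with h | h
        · exact Or.inl (hu1.trans h)
        · exact Or.inr (hu1.trans h)
      · have hh2 : headAt2 (p.edir (j + 1 - 1)) := by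
          simp only [Nat.add_sub_cancel, he]; exact Or.inl rfl
        have hnh1 : ¬ headAt1 (p.edir (j + 1)) := fun h => hc ⟨hh2, h⟩
        exact ih (j + 1) (by omega) (not_headAt1_iff.mp hnh1) u hu1
  have left_walk : ∀ j, j < p.len → p.edir j = EdgeDir.bwd →
      ∀ u, K.anc u (p.vert (j + 1)) → (K.anc u w ∨ K.anc u z) := by
    intro j
    induction j with
    | zero =>
      intro hj he u hu
      have hd1 : K.dir (p.vert (0 + 1)) (p.vert 0) := by
        have h := p.valid 0 hj; rw [he] at h; exact h
      have h2 : K.anc u (p.vert 0) := hu.trans (anc_of_dir hd1)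
      rw [p.first] at h2; exact Or.inl h2
    | succ j ih =>
      intro hj he u hu
      have hd1 : K.dir (p.vert (j + 1 + 1)) (p.vert (j + 1)) := by
        have h := p.valid (j + 1) hj; rw [he] at h; exact h
      have hu1 : K.anc u (p.vert (j + 1)) := hu.trans (anc_of_dir hd1)
      by_cases hc : p.collider (j + 1)
      · rcases hact (j + 1) (by omega) (by omega) hc with h | h
        · exact Or.inl (hu1.trans h)
        · exact Or.inr (hu1.trans h)
      · have hh1 : headAt1 (p.edir (j + 1)) := by rw [he]; exact Or.inl rfl
        have hnh2 : ¬ headAt2 (p.edir (j + 1 - 1)) := fun h => hc ⟨h, hh1⟩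
        have he0 : p.edir j = EdgeDir.bwd := by
          have h3 := not_headAt2_iff.mp hnh2
          simpa using h3
        exact ih (by omega) he0 u hu1
  have hclaim : ∀ i, 0 < i → i < p.len →
      p.collider i ∧ (K.anc (p.vert i) w ∨ K.anc (p.vert i) z) := by
    intro i hi0 hil
    by_cases hc : p.collider i
    · exact ⟨hc, hact i hi0 hil hc⟩
    · exfalso
      have hnmem := (hbl i hi0 hil).2 hc
      have hne := hvne i hi0 hil
      have hnact : ¬ (K.anc (p.vert i) w ∨ K.anc (p.vert i) z) := by
        intro h; exact hnmem ⟨hne.1, hne.2, h⟩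
      unfold MPath.collider at hc
      rw [not_and_or] at hc
      rcases hc with hc | hc
      · have he : p.edir (i - 1) = EdgeDir.bwd := not_headAt2_iff.mp hc
        have hiv : i - 1 + 1 = i := by omega
        refine hnact (left_walk (i - 1) (by omega) he (p.vert i) ?_)
        rw [hiv]
        exact Relation.ReflTransGen.refl
      · have he : p.edir i = EdgeDir.fwd := not_headAt1_iff.mp hc
        exact hnact (right_walk (p.len - i - 1) i (by omega) he (p.vert i)
          Relation.ReflTransGen.refl)
  obtain ⟨S0, hS0, hsep⟩ := hG.maximal w hwv z hzv hwz hnadj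
  obtain ⟨i, hi0, hil, hcase⟩ := hsep (transport hv hd hb p)
  rcases hcase with ⟨hc, hall⟩ | ⟨hnc, _⟩
  · rcases (hclaim i hi0 hil).2 with h | h
    · exact hall w (by simp) (Relation.ReflTransGen.mono hd _ _ h)
    · exact hall z (by simp) (Relation.ReflTransGen.mono hd _ _ h)
  · exact hnc ((hclaim i hi0 hil).1)


/-- If `x` is removable, `x → zs`, and `w` has a collider path to `x` whose interior
vertices are all ancestors of `zs`, with `zs` not on the path, then `w, zs` are adjacent. -/
lemma adj_of_colliderPath {G : MixedGraph V} (hG : G.IsMAG) {x : V}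
    (hrem : G.Removable x) {zs : V} (hxzs : G.dir x zs)
    {w : V} (hwx : w ≠ x) (hwzs : w ≠ zs)
    (R : MPath G w x) (hcp : R.isColliderPath)
    (hanc : ∀ i, 0 < i → i < R.len → G.anc (R.vert i) zs)
    (hzR : ∀ i, i ≤ R.len → R.vert i ≠ zs) :
    G.adj w zs := by
  by_contra hnadj
  have hxv : x ∈ G.verts := (G.dir_mem hxzs).1
  have hzsv : zs ∈ G.verts := (G.dir_mem hxzs).2
  have hxzs_ne : x ≠ zs := dir_ne hG hxzs
  have hwv : w ∈ G.verts := by have h := R.mem 0 (by omega); rwa [R.first] at h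
  set H := G.induce (G.verts \ {x}) with hH
  have hv : H.verts ⊆ G.verts := fun v hv => hv.1
  have hdH : ∀ a b, H.dir a b → G.dir a b := fun a b h => h.1
  have hbH : ∀ a b, H.bi a b → G.bi a b := fun a b h => h.1
  set S : Set V := {v | v ≠ w ∧ v ≠ zs ∧ (H.anc v w ∨ H.anc v zs)} with hS
  have hsep : mSep H w zs S := sep_lemma hG hv hdH hbH hwv hzsv hwzs hnadj
  have hSsub : S ⊆ G.verts \ ({x, w, zs} : Set V) := by
    intro v hvS
    obtain ⟨hvw, hvzs, hanc'⟩ := hvS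
    have hvW : v ∈ G.verts \ ({x} : Set V) := by
      rcases hanc' with h | h <;> rcases h.cases_head with h1 | ⟨c, hc, -⟩
      · exact absurd h1 hvw
      · exact hc.2.1
      · exact absurd h1 hvzs
      · exact hc.2.1
    refine ⟨hvW.1, ?_⟩
    simp only [Set.mem_insert_iff, Set.mem_singleton_iff]
    push_neg
    exact ⟨by simpa using hvW.2, hvw, hvzs⟩
  have hmsepG : mSep G w zs S :=
    (hrem w zs hwv hzsv hwx hxzs_ne.symm hwzs S hSsub).mpr hsep
  obtain ⟨i, hi0, hil, hcase⟩ := hmsepG (snoc R hxzs hzR)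
  rw [snoc_len] at hil
  by_cases hir : i < R.len
  · rcases hcase with ⟨-, hall⟩ | ⟨hnc, -⟩
    · refine hall zs (by simp) ?_
      have hvi : (snoc R hxzs hzR).vert i = R.vert i := snoc_vert_of_le _ _ _ (le_of_lt hir)
      rw [hvi]
      exact hanc i hi0 hir
    · exact hnc ((snoc_collider_of_lt R hxzs hzR hi0 hir).mpr (hcp i hi0 hir))
  · have hieq : i = R.len := by omega
    subst hieq
    rcases hcase with ⟨hc, -⟩ | ⟨-, hmem⟩
    · exact snoc_not_collider_last R hxzs hzR hc
    · have hvx : (snoc R hxzs hzR).vert R.len = x := by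
        rw [snoc_vert_of_le _ _ _ (le_refl _), R.last]
      rw [hvx] at hmem
      obtain ⟨-, -, hanc'⟩ := hmem
      rcases hanc' with h | h <;> rcases h.cases_head with h1 | ⟨c, hc, -⟩
      · exact hwx h1.symm
      · exact hc.2.1.2 rfl
      · exact hxzs_ne h1
      · exact hc.2.1.2 rfl


lemma exists_max_child {G : MixedGraph V} [Fintype V] (hG : G.IsMAG) {x c0 : V}
    (h0 : G.dir x c0) :
    ∃ zs, G.dir x zs ∧ ∀ c, G.dir x c → G.anc zs c → c = zs := by
  classical
  let r : V → V → Prop := fun a b => G.anc b a ∧ b ≠ a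
  haveI : IsTrans V r := ⟨fun a b c hab hbc => by
    refine ⟨hbc.1.trans hab.1, fun h => ?_⟩
    subst h
    exact hab.2 (anc_antisymm hG hab.1 hbc.1)⟩
  haveI : IsIrrefl V r := ⟨fun a h => h.2 rfl⟩
  obtain ⟨zs, hzs, hmin⟩ :=
    (Finite.wellFounded_of_trans_of_irrefl r).has_min {c | G.dir x c} ⟨c0, h0⟩
  refine ⟨zs, hzs, fun c hc hanc => ?_⟩
  by_contra hne
  exact hmin c hc ⟨hanc, fun h => hne h.symm⟩

lemma interior_edge_bidir {G : MixedGraph V} {x y : V} (p : MPath G x y)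
    (hcp : p.isColliderPath) {k : ℕ} (hk0 : 0 < k) (hk : k + 1 < p.len) :
    p.edir k = EdgeDir.bidir := by
  have h1 := (hcp k hk0 (by omega)).2
  have h2 := (hcp (k + 1) (by omega) hk).1
  simp only [Nat.add_sub_cancel] at h2
  rcases h2 with h2 | h2
  · rcases h1 with h1 | h1
    · rw [h1] at h2; simp at h2
    · exact h1
  · exact h2

lemma rtg_bi_of_bidir {G : MixedGraph V} {x y : V} (p : MPath G x y) (iend : ℕ)
    (hie : iend ≤ p.len) :
    ∀ d j, j + d = iend → (∀ k, j ≤ k → k < iend → p.edir k = EdgeDir.bidir) →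
      Relation.ReflTransGen G.bi (p.vert j) (p.vert iend) := by
  intro d
  induction d with
  | zero =>
    intro j hj _
    have h : j = iend := by omega
    rw [h]
  | succ d ih =>
    intro j hj hbid
    have hjlt : j < iend := by omega
    have hbi : G.bi (p.vert j) (p.vert (j + 1)) := by
      have h := p.valid j (by omega)
      rw [hbid j le_rfl hjlt] at h
      exact h
    exact Relation.ReflTransGen.head hbi
      (ih (j + 1) (by omega) (fun k hk1 hk2 => hbid k (by omega) hk2))

lemma mb_subset_paP {G : MixedGraph V} [Fintype V] (hG : G.IsMAG) {x : V}
    (hx : x ∈ G.verts) (hrem : G.Removable x) :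
    ∃ a ∈ G.verts, G.mb x ⊆ G.paP a ∧ (a = x ∨ G.dir x a) := by
  classical
  have hPaMem : ∀ a b : V, G.dir b a → b ∈ G.paP a := fun a b h => Or.inl (Or.inl h)
  have hDisMem : ∀ a b : V, Relation.ReflTransGen G.bi b a → b ∈ G.paP a :=
    fun a b h => Or.inl (Or.inr h)
  have hPaDisMem : ∀ a b c : V, G.dir b c → Relation.ReflTransGen G.bi c a →
      b ∈ G.paP a := by
    intro a b c h1 h2
    exact Or.inr (Set.mem_biUnion h2 h1)
  by_cases hch : ∃ c, G.dir x c
  · obtain ⟨c0, hc0⟩ := hch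
    obtain ⟨zs, hxzs, hmax⟩ := exists_max_child hG hc0
    have hzsv : zs ∈ G.verts := (G.dir_mem hxzs).2
    have hxzs_ne : x ≠ zs := dir_ne hG hxzs
    refine ⟨zs, hzsv, ?_, Or.inr hxzs⟩
    intro y hy
    obtain ⟨hyx, P, hcp⟩ := hy
    by_cases hyzs : y = zs
    · rw [hyzs]; exact hDisMem zs zs Relation.ReflTransGen.refl
    have hne_int_x : ∀ i, 0 < i → i < P.len → P.vert i ≠ x := by
      intro i h1 h2 h3
      have h4 := P.inj i P.len (by omega) le_rfl (by rw [h3, P.last])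
      omega
    by_cases hA : ∃ i, 0 < i ∧ i < P.len ∧ Relation.ReflTransGen G.bi (P.vert i) zs
    · obtain ⟨i, hi0, hil, hdis⟩ := hA
      have hchain : Relation.ReflTransGen G.bi (P.vert 1) (P.vert i) :=
        rtg_bi_of_bidir P i (le_of_lt hil) (i - 1) 1 (by omega)
          (fun k hk1 hk2 => interior_edge_bidir P hcp (by omega) (by omega))
      have h1dis : Relation.ReflTransGen G.bi (P.vert 1) zs := hchain.trans hdis
      have hlen2 : 1 < P.len := by omega
      have hh2 := (hcp 1 (by omega) hlen2).1
      simp only [Nat.sub_self] at hh2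
      have hv0 := P.valid 0 (by omega)
      rcases hh2 with he | he <;> rw [he] at hv0 <;> rw [P.first] at hv0
      · exact hPaDisMem zs y (P.vert (0 + 1)) hv0 h1dis
      · exact hDisMem zs y (Relation.ReflTransGen.head hv0 h1dis)
    · push_neg at hA
      have hint_ne_zs : ∀ i, 0 < i → i < P.len → P.vert i ≠ zs := by
        intro i h1 h2 h3
        exact hA i h1 h2 (h3 ▸ Relation.ReflTransGen.refl)
      have hall_ne_zs : ∀ i, i ≤ P.len → P.vert i ≠ zs := by
        intro i hi
        rcases Nat.eq_or_lt_of_le hi with h | h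
        · rw [h, P.last]; exact fun hh => hxzs_ne hh
        · rcases Nat.eq_zero_or_pos i with h0 | h0
          · rw [h0, P.first]; exact hyzs
          · exact hint_ne_zs i h0 h
      have hdir_int : ∀ m i, 0 < i → i < P.len → P.len - i = m → G.dir (P.vert i) zs := by
        intro m
        induction m using Nat.strong_induction_on with
        | _ m ih =>
          intro i hi0 hil hm
          have hadj : G.adj (P.vert i) zs := by
            refine adj_of_colliderPath hG hrem hxzs (hne_int_x i hi0 hil)
              (hint_ne_zs i hi0 hil) (suffix P i hil)
              (suffix_isColliderPath P i hil hcp) ?_ ?_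
            · intro k hk0 hkl
              rw [suffix_vert]
              rw [suffix_len] at hkl
              exact anc_of_dir (ih (P.len - (i + k)) (by omega) (i + k) (by omega)
                (by omega) rfl)
            · intro k hk
              rw [suffix_vert]
              rw [suffix_len] at hk
              exact hall_ne_zs (i + k) (by omega)
          rcases hadj with h | h | h
          · exact h
          · exfalso
            by_cases hil1 : i + 1 < P.len
            · have hbid : P.edir i = EdgeDir.bidir := interior_edge_bidir P hcp hi0 hil1
              have hbi : G.bi (P.vert i) (P.vert (i + 1)) := by
                have hv := P.valid i hil; rw [hbid] at hv; exact hv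
              have hd1 : G.dir (P.vert (i + 1)) zs :=
                ih (P.len - (i + 1)) (by omega) (i + 1) (by omega) hil1 rfl
              exact hG.no_almost_dir_cycle _ _ hbi ((anc_of_dir hd1).trans (anc_of_dir h))
            · have hieq : i + 1 = P.len := by omega
              have hh1 := (hcp i hi0 hil).2
              have hv := P.valid i hil
              have hvx : P.vert (i + 1) = x := by rw [hieq, P.last]
              rcases hh1 with he | he <;> rw [he] at hv <;> rw [hvx] at hv
              · exact (hint_ne_zs i hi0 hil) (hmax (P.vert i) hv (anc_of_dir h))
              · exact hG.no_almost_dir_cycle _ _ hv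
                  ((anc_of_dir hxzs).trans (anc_of_dir h))
          · exact absurd (Relation.ReflTransGen.single h) (hA i hi0 hil)
      have hadjy : G.adj y zs := by
        refine adj_of_colliderPath hG hrem hxzs hyx hyzs P hcp ?_ hall_ne_zs
        intro i h1 h2
        exact anc_of_dir (hdir_int (P.len - i) i h1 h2 rfl)
      rcases hadjy with h | h | h
      · exact hPaMem zs y h
      · exfalso
        by_cases hl1 : 1 < P.len
        · have hh2 := (hcp 1 (by omega) hl1).1
          simp only [Nat.sub_self] at hh2
          have hv0 := P.valid 0 (by omega)
          have hd1 : G.dir (P.vert (0 + 1)) zs := hdir_int (P.len - 1) 1 (by omega) hl1 rfl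
          rcases hh2 with he | he <;> rw [he] at hv0 <;> rw [P.first] at hv0
          · exact hG.no_dir_cycle zs y h ((anc_of_dir hv0).trans (anc_of_dir hd1))
          · exact hG.no_almost_dir_cycle _ _ hv0 ((anc_of_dir hd1).trans (anc_of_dir h))
        · have hlen1 : P.len = 1 := by have := P.len_pos; omega
          have hv0 := P.valid 0 (by omega)
          have hvx : P.vert (0 + 1) = x := by
            have h1 : (0 + 1 : ℕ) = P.len := by omega
            rw [h1, P.last]
          cases he : P.edir 0 <;> rw [he] at hv0
          · rw [P.first, hvx] at hv0
            exact hG.no_dir_cycle zs y h ((anc_of_dir hv0).trans (anc_of_dir hxzs))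
          · rw [P.first, hvx] at hv0
            exact hyzs (hmax y hv0 (anc_of_dir h))
          · rw [P.first, hvx] at hv0
            exact hG.no_almost_dir_cycle _ _ hv0 ((anc_of_dir hxzs).trans (anc_of_dir h))
      · exact hDisMem zs y (Relation.ReflTransGen.single h)
  · push_neg at hch
    refine ⟨x, hx, ?_, Or.inl rfl⟩
    intro y hy
    obtain ⟨hyx, P, hcp⟩ := hy
    by_cases hl1 : P.len = 1
    · have hv0 := P.valid 0 (by omega)
      have hvx : P.vert (0 + 1) = x := by
        have h1 : (0 + 1 : ℕ) = P.len := by omega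
        rw [h1, P.last]
      cases he : P.edir 0 <;> rw [he] at hv0 <;> rw [P.first, hvx] at hv0
      · exact hPaMem x y hv0
      · exact absurd hv0 (hch y)
      · exact hDisMem x y (Relation.ReflTransGen.single hv0)
    · have hl2 : 1 < P.len := by have := P.len_pos; omega
      have hh1 := (hcp (P.len - 1) (by omega) (by omega)).2
      have hvlast := P.valid (P.len - 1) (by omega)
      have hvx : P.vert (P.len - 1 + 1) = x := by
        have h1 : P.len - 1 + 1 = P.len := by omega
        rw [h1, P.last]
      rcases hh1 with he | he <;> rw [he] at hvlast <;> rw [hvx] at hvlast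
      · exact absurd hvlast (hch _)
      · have hchain : Relation.ReflTransGen G.bi (P.vert 1) (P.vert P.len) :=
          rtg_bi_of_bidir P P.len le_rfl (P.len - 1) 1 (by omega)
            (fun k hk1 hk2 => by
              rcases Nat.lt_or_ge (k + 1) P.len with hlt | hge
              · exact interior_edge_bidir P hcp (by omega) hlt
              · have hk : k = P.len - 1 := by omega
                rw [hk]; exact he)
        rw [P.last] at hchain
        have hh2 := (hcp 1 (by omega) hl2).1
        simp only [Nat.sub_self] at hh2
        have hv0 := P.valid 0 (by omega)
        rcases hh2 with he0 | he0 <;> rw [he0] at hv0 <;> rw [P.first] at hv0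
        · exact hPaDisMem x y (P.vert (0 + 1)) hv0 hchain
        · exact hDisMem x y (Relation.ReflTransGen.head hv0 hchain)

end Stmt4




end Aux4

/-- In a MAG `G`, if `X` is removable then `|Mb(X)| ≤ Δin⁺(G)`;
moreover, if `G` is a DAG (no bidirected edges) then `|Mb(X)| ≤ Δin(G)`. -/
theorem stmt_4 {V : Type*} [Fintype V] (G : MixedGraph V) (hG : G.IsMAG)
    (x : V) (hx : x ∈ G.verts) (hrem : G.Removable x) :
    (G.mb x).ncard ≤ G.deltaInPlus ∧
      ((∀ a b, ¬ G.bi a b) → (G.mb x).ncard ≤ G.deltaIn) := by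
  classical
  obtain ⟨a, haV, hsub, hcase⟩ := Stmt4.mb_subset_paP hG hx hrem
  have hbdd : ∀ (f : V → Set V), BddAbove {n | ∃ a ∈ G.verts, n = (f a).ncard} := by
    intro f
    refine ⟨Fintype.card V, ?_⟩
    rintro n ⟨b, -, rfl⟩
    calc (f b).ncard ≤ (Set.univ : Set V).ncard :=
          Set.ncard_le_ncard (Set.subset_univ _) Set.finite_univ
      _ = Fintype.card V := by rw [Set.ncard_univ, Nat.card_eq_fintype_card]
  constructor
  · calc (G.mb x).ncard ≤ (G.paP a).ncard := Set.ncard_le_ncard hsub (Set.toFinite _)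
      _ ≤ G.deltaInPlus := le_csSup (hbdd _) ⟨a, haV, rfl⟩
  · intro hnobi
    have hdis : ∀ b c : V, Relation.ReflTransGen G.bi c b → c = b := by
      intro b c h
      rcases h.cases_head with h1 | ⟨d, hd, -⟩
      · exact h1
      · exact absurd hd (hnobi c d)
    have hpaP : ∀ b, G.paP b ⊆ insert b (G.parents b) := by
      intro b v hv
      rcases hv with (hv | hv) | hv
      · exact Set.mem_insert_of_mem _ hv
      · have h := hdis b v hv
        rw [h]
        exact Set.mem_insert _ _
      · simp only [Set.mem_iUnion] at hv
        obtain ⟨c, hc, hv⟩ := hv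
        have h := hdis b c hc
        rw [h] at hv
        exact Set.mem_insert_of_mem _ hv
    have hxnmb : x ∉ G.mb x := fun h => h.1 rfl
    rcases hcase with rfl | hdirxa
    · have hsub2 : G.mb a ⊆ G.parents a := by
        intro v hv
        rcases Set.mem_insert_iff.mp (hpaP a (hsub hv)) with rfl | h
        · exact absurd hv hxnmb
        · exact h
      calc (G.mb a).ncard ≤ (G.parents a).ncard :=
            Set.ncard_le_ncard hsub2 (Set.toFinite _)
        _ ≤ G.deltaIn := le_csSup (hbdd _) ⟨a, haV, rfl⟩
    · have hxpar : x ∈ G.parents a := hdirxa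
      have hsub2 : G.mb x ⊆ insert a (G.parents a \ {x}) := by
        intro v hv
        rcases Set.mem_insert_iff.mp (hpaP a (hsub hv)) with rfl | h
        · exact Set.mem_insert _ _
        · refine Set.mem_insert_of_mem _ ⟨h, ?_⟩
          simp only [Set.mem_singleton_iff]
          rintro rfl
          exact hxnmb hv
      have h1 : (G.mb x).ncard ≤ (insert a (G.parents a \ {x})).ncard :=
        Set.ncard_le_ncard hsub2 (Set.toFinite _)
      have h2 : (insert a (G.parents a \ {x})).ncard ≤ (G.parents a \ {x}).ncard + 1 :=
        Set.ncard_insert_le _ _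
      have h3 : (G.parents a \ ({x} : Set V)).ncard = (G.parents a).ncard - 1 :=
        Set.ncard_diff_singleton_of_mem hxpar
      have h4 : 0 < (G.parents a).ncard :=
        (Set.ncard_pos (Set.toFinite _)).mpr ⟨x, hxpar⟩
      have h5 : (G.parents a).ncard ≤ G.deltaIn := le_csSup (hbdd _) ⟨a, haV, rfl⟩
      omega
end
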